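/- arXiv:1804.00202 — 8 statements merged into one kernel-verified Lean document; each statement's English description precedes it below -/
import Mathlib

section
/- Let α, β > 0 and s ≥ 0 satisfy 2s < αβ, and let m, γ > 0. Then there exists a finite constant C > 0 (one may take C = 3 + 2γ²/m² + 2·∑_{k≥1} k^{-(1+αβ+2s)} + (2/m²)·∑_{k≥1} k^{-(1+αβ−2s)}) such that for every x, v ∈ ℝ and every real sequence (z_k)_{k≥1} with ∑_{k≥1} k^{-2s} z_k² < ∞, the series ∑_{k≥1} √(c_k) z_k converges absolutely and v² + ( (γ/m) v + (1/m) ∑_{k≥1} √(c_k) z_k )² + ∑_{k≥1} k^{-2s} ( −λ_k z_k + √(c_k) v )² ≤ C · ( x² + v² + ∑_{k≥1} k^{-2s} z_k² ). (This expresses that the drift operator L of the Markovian GLE is a bounded linear operator on the weighted Hilbert space H_{-s}.) -/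
open MeasureTheory Real Filter

lemma sum_shifted_rpow (q : ℝ) (hq : q < -1) :
    Summable (fun k : ℕ => ((k : ℝ) + 1) ^ q) := by
  have h := (Real.summable_nat_rpow (p := q)).mpr hq
  have := (summable_nat_add_iff 1).mpr h
  refine this.congr fun n => ?_
  push_cast
  ring_nf

lemma tsum_CS (u w : ℕ → ℝ) (hu : Summable (fun k => u k ^ 2))
    (hw : Summable (fun k => w k ^ 2)) :
    (∑' k, u k * w k) ^ 2 ≤ (∑' k, u k ^ 2) * (∑' k, w k ^ 2) := by
  have hsum : Summable (fun k => u k * w k) := by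
    refine Summable.of_abs (Summable.of_nonneg_of_le (fun k => abs_nonneg _)
      (fun k => ?_) ((hu.add hw).mul_left (1/2)))
    have := abs_mul (u k) (w k)
    nlinarith [sq_nonneg (|u k| - |w k|), sq_abs (u k), sq_abs (w k)]
  have hb : ∀ S : Finset ℕ, (∑ k ∈ S, u k * w k) ^ 2 ≤ (∑' k, u k ^ 2) * (∑' k, w k ^ 2) := by
    intro S
    calc (∑ k ∈ S, u k * w k) ^ 2 ≤ (∑ k ∈ S, u k ^ 2) * (∑ k ∈ S, w k ^ 2) :=
          Finset.sum_mul_sq_le_sq_mul_sq S u w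
      _ ≤ (∑' k, u k ^ 2) * (∑' k, w k ^ 2) := by
          apply mul_le_mul
          · exact Summable.sum_le_tsum S (fun i _ => sq_nonneg _) hu
          · exact Summable.sum_le_tsum S (fun i _ => sq_nonneg _) hw
          · positivity
          · exact tsum_nonneg fun i => sq_nonneg _
  have ht : Tendsto (fun S : Finset ℕ => (∑ k ∈ S, u k * w k) ^ 2) atTop
      (nhds ((∑' k, u k * w k) ^ 2)) :=
    ((continuous_pow 2).continuousAt).tendsto.comp hsum.hasSum
  exact le_of_tendsto ht (Filter.Eventually.of_forall hb)

set_option maxHeartbeats 1000000 in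
/-- The drift operator `L` of the Markovian GLE is bounded on the weighted space `H_{-s}`:
for `2s < αβ`, with `c_k = k^{-(1+αβ)}`, `λ_k = k^{-β}` (modes indexed by `k+1` for `k : ℕ`). -/
theorem stmt_0 (α β s m γ : ℝ) (hα : 0 < α) (hβ : 0 < β) (hs : 0 ≤ s)
    (h2s : 2 * s < α * β) (hm : 0 < m) (hγ : 0 < γ) :
    ∃ C : ℝ, 0 < C ∧
      C = 3 + 2 * γ ^ 2 / m ^ 2 + 2 * (∑' k : ℕ, ((k : ℝ) + 1) ^ (-(1 + α * β + 2 * s)))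
          + (2 / m ^ 2) * ∑' k : ℕ, ((k : ℝ) + 1) ^ (-(1 + α * β - 2 * s)) ∧
      ∀ (x v : ℝ) (z : ℕ → ℝ),
        Summable (fun k : ℕ => ((k : ℝ) + 1) ^ (-(2 * s)) * (z k) ^ 2) →
        Summable (fun k : ℕ => |Real.sqrt (((k : ℝ) + 1) ^ (-(1 + α * β))) * z k|) ∧
        v ^ 2
          + ((γ / m) * v + (1 / m) * ∑' k : ℕ, Real.sqrt (((k : ℝ) + 1) ^ (-(1 + α * β))) * z k) ^ 2
          + (∑' k : ℕ, ((k : ℝ) + 1) ^ (-(2 * s)) *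
              (-(((k : ℝ) + 1) ^ (-β)) * z k
                + Real.sqrt (((k : ℝ) + 1) ^ (-(1 + α * β))) * v) ^ 2)
          ≤ C * (x ^ 2 + v ^ 2 + ∑' k : ℕ, ((k : ℝ) + 1) ^ (-(2 * s)) * (z k) ^ 2) := by
  have hpos : ∀ k : ℕ, (0:ℝ) < (k:ℝ) + 1 := fun k => by positivity
  have h1le : ∀ k : ℕ, (1:ℝ) ≤ (k:ℝ) + 1 := fun k => by
    have := Nat.cast_nonneg (α := ℝ) k; linarith
  set A := ∑' k : ℕ, ((k : ℝ) + 1) ^ (-(1 + α * β + 2 * s)) with hAdef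
  set B := ∑' k : ℕ, ((k : ℝ) + 1) ^ (-(1 + α * β - 2 * s)) with hBdef
  have hA : 0 ≤ A := tsum_nonneg fun k => Real.rpow_nonneg (hpos k).le _
  have hB : 0 ≤ B := tsum_nonneg fun k => Real.rpow_nonneg (hpos k).le _
  have hSA : Summable (fun k : ℕ => ((k : ℝ) + 1) ^ (-(1 + α * β + 2 * s))) :=
    sum_shifted_rpow _ (by linarith)
  have hSB : Summable (fun k : ℕ => ((k : ℝ) + 1) ^ (-(1 + α * β - 2 * s))) :=
    sum_shifted_rpow _ (by linarith)
  refine ⟨_, ?_, rfl, ?_⟩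
  · have : (0:ℝ) ≤ 2 * γ ^ 2 / m ^ 2 := by positivity
    have : (0:ℝ) ≤ 2 / m ^ 2 * B := by positivity
    nlinarith
  intro x v z hz
  -- the Cauchy–Schwarz decomposition of the cross series
  set u : ℕ → ℝ := fun k => ((k:ℝ) + 1) ^ (-s) * z k with hudef
  set w : ℕ → ℝ := fun k => ((k:ℝ) + 1) ^ s * Real.sqrt (((k:ℝ) + 1) ^ (-(1 + α * β))) with hwdef
  have hu2 : ∀ k, u k ^ 2 = ((k:ℝ) + 1) ^ (-(2 * s)) * z k ^ 2 := by
    intro k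
    have h0 := hpos k
    show (((k:ℝ)+1) ^ (-s) * z k) ^ 2 = _
    rw [mul_pow, sq (((k:ℝ)+1) ^ (-s)), ← Real.rpow_add h0,
      show -s + -s = -(2 * s) by ring]
  have hw2 : ∀ k, w k ^ 2 = ((k:ℝ) + 1) ^ (-(1 + α * β - 2 * s)) := by
    intro k
    have h0 := hpos k
    show (((k:ℝ)+1) ^ s * Real.sqrt (((k:ℝ)+1) ^ (-(1 + α * β)))) ^ 2 = _
    rw [mul_pow, Real.sq_sqrt (Real.rpow_nonneg h0.le _), sq (((k:ℝ)+1) ^ s),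
      ← Real.rpow_add h0, ← Real.rpow_add h0,
      show s + s + -(1 + α * β) = -(1 + α * β - 2 * s) by ring]
  have huw : ∀ k, u k * w k = Real.sqrt (((k:ℝ) + 1) ^ (-(1 + α * β))) * z k := by
    intro k
    have h0 := hpos k
    show ((k:ℝ)+1) ^ (-s) * z k * (((k:ℝ)+1) ^ s * _) = _
    rw [show ((k:ℝ)+1) ^ (-s) * z k * (((k:ℝ)+1) ^ s *
        Real.sqrt (((k:ℝ)+1) ^ (-(1 + α * β)))) =
        (((k:ℝ)+1) ^ (-s) * ((k:ℝ)+1) ^ s) *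
        (Real.sqrt (((k:ℝ)+1) ^ (-(1 + α * β))) * z k) by ring,
      ← Real.rpow_add h0, show -s + s = 0 by ring, Real.rpow_zero, one_mul]
  have hu2sum : Summable (fun k => u k ^ 2) := hz.congr fun k => (hu2 k).symm
  have hw2sum : Summable (fun k => w k ^ 2) := hSB.congr fun k => (hw2 k).symm
  have habs : Summable (fun k : ℕ => |Real.sqrt (((k : ℝ) + 1) ^ (-(1 + α * β))) * z k|) := by
    refine Summable.of_nonneg_of_le (fun k => abs_nonneg _) (fun k => ?_)
      ((hu2sum.add hw2sum).mul_left (1/2))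
    rw [← huw k]
    have := abs_mul (u k) (w k)
    nlinarith [sq_nonneg (|u k| - |w k|), sq_abs (u k), sq_abs (w k)]
  refine ⟨habs, ?_⟩
  set Z := ∑' k : ℕ, ((k : ℝ) + 1) ^ (-(2 * s)) * z k ^ 2 with hZdef
  have hZ0 : 0 ≤ Z := tsum_nonneg fun k => by positivity
  set S := ∑' k : ℕ, Real.sqrt (((k : ℝ) + 1) ^ (-(1 + α * β))) * z k with hSdef
  have hSsq : S ^ 2 ≤ Z * B := by
    have h1 : S = ∑' k, u k * w k := tsum_congr fun k => (huw k).symm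
    have h2 : (∑' k, u k ^ 2) = Z := tsum_congr fun k => hu2 k
    have h3 : (∑' k, w k ^ 2) = B := tsum_congr fun k => hw2 k
    rw [h1, ← h2, ← h3]
    exact tsum_CS u w hu2sum hw2sum
  -- bound the third series termwise
  set g : ℕ → ℝ := fun k => ((k : ℝ) + 1) ^ (-(2 * s)) *
      (-(((k : ℝ) + 1) ^ (-β)) * z k
        + Real.sqrt (((k : ℝ) + 1) ^ (-(1 + α * β))) * v) ^ 2 with hgdef
  set G : ℕ → ℝ := fun k => 2 * (((k : ℝ) + 1) ^ (-(2 * s)) * z k ^ 2)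
      + 2 * v ^ 2 * ((k : ℝ) + 1) ^ (-(1 + α * β + 2 * s)) with hGdef
  have hgle : ∀ k, g k ≤ G k := by
    intro k
    have h0 := hpos k
    have hL0 : 0 ≤ ((k:ℝ)+1) ^ (-β) := Real.rpow_nonneg h0.le _
    have hL1 : ((k:ℝ)+1) ^ (-β) ≤ 1 :=
      Real.rpow_le_one_of_one_le_of_nonpos (h1le k) (by linarith)
    have hsqc : Real.sqrt (((k:ℝ)+1) ^ (-(1 + α * β))) ^ 2 = ((k:ℝ)+1) ^ (-(1 + α * β)) :=
      Real.sq_sqrt (Real.rpow_nonneg h0.le _)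
    have hkey : ((k:ℝ)+1) ^ (-(2*s)) * ((k:ℝ)+1) ^ (-(1 + α * β))
        = ((k:ℝ)+1) ^ (-(1 + α * β + 2 * s)) := by
      rw [← Real.rpow_add h0, show -(2*s) + -(1 + α * β) = -(1 + α * β + 2 * s) by ring]
    have hinner : (-(((k : ℝ) + 1) ^ (-β)) * z k
        + Real.sqrt (((k : ℝ) + 1) ^ (-(1 + α * β))) * v) ^ 2
        ≤ 2 * z k ^ 2 + 2 * v ^ 2 * ((k:ℝ)+1) ^ (-(1 + α * β)) := by
      nlinarith [sq_nonneg (((k:ℝ)+1) ^ (-β) * z k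
          + Real.sqrt (((k:ℝ)+1) ^ (-(1 + α * β))) * v), sq_nonneg (z k),
        mul_nonneg (mul_nonneg (sub_nonneg.mpr hL1) (by linarith : (0:ℝ) ≤ 1 + ((k:ℝ)+1) ^ (-β)))
          (sq_nonneg (z k))]
    have hW : 0 ≤ ((k:ℝ)+1) ^ (-(2*s)) := Real.rpow_nonneg h0.le _
    calc g k ≤ ((k:ℝ)+1) ^ (-(2*s)) *
          (2 * z k ^ 2 + 2 * v ^ 2 * ((k:ℝ)+1) ^ (-(1 + α * β))) :=
          mul_le_mul_of_nonneg_left hinner hW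
      _ = G k := by
          show _ = 2 * (((k : ℝ) + 1) ^ (-(2 * s)) * z k ^ 2)
            + 2 * v ^ 2 * ((k : ℝ) + 1) ^ (-(1 + α * β + 2 * s))
          rw [← hkey]; ring
  have hGsum : Summable G := ((hz.mul_left 2).add ((hSA.mul_left (2 * v ^ 2))))
  have hgsum : Summable g := Summable.of_nonneg_of_le (fun k => by positivity) hgle hGsum
  have hgts : (∑' k, g k) ≤ 2 * Z + 2 * v ^ 2 * A := by
    have := Summable.tsum_le_tsum hgle hgsum hGsum
    rwa [Summable.tsum_add (hz.mul_left 2) (hSA.mul_left (2 * v ^ 2)), tsum_mul_left,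
      tsum_mul_left] at this
  have hT2 : ((γ / m) * v + (1 / m) * S) ^ 2
      ≤ 2 * γ ^ 2 / m ^ 2 * v ^ 2 + 2 / m ^ 2 * (Z * B) := by
    have h2 : (2 / m ^ 2) * S ^ 2 ≤ (2 / m ^ 2) * (Z * B) := by
      have : (0:ℝ) ≤ 2 / m ^ 2 := by positivity
      exact mul_le_mul_of_nonneg_left hSsq this
    calc ((γ / m) * v + (1 / m) * S) ^ 2
        ≤ 2 * ((γ / m) * v) ^ 2 + 2 * ((1 / m) * S) ^ 2 := by
          nlinarith [sq_nonneg ((γ / m) * v - (1 / m) * S)]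
      _ = 2 * γ ^ 2 / m ^ 2 * v ^ 2 + 2 / m ^ 2 * S ^ 2 := by ring
      _ ≤ 2 * γ ^ 2 / m ^ 2 * v ^ 2 + 2 / m ^ 2 * (Z * B) := by linarith
  calc v ^ 2 + ((γ / m) * v + (1 / m) * S) ^ 2 + (∑' k, g k)
      ≤ v ^ 2 + (2 * γ ^ 2 / m ^ 2 * v ^ 2 + 2 / m ^ 2 * (Z * B))
        + (2 * Z + 2 * v ^ 2 * A) := by linarith
    _ ≤ (3 + 2 * γ ^ 2 / m ^ 2 + 2 * A + 2 / m ^ 2 * B) * (x ^ 2 + v ^ 2 + Z) := by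
        have hx : (0:ℝ) ≤ x ^ 2 := sq_nonneg x
        have hv : (0:ℝ) ≤ v ^ 2 := sq_nonneg v
        have hmn : (0:ℝ) ≤ 2 / m ^ 2 := by positivity
        have hgm : (0:ℝ) ≤ 2 * γ ^ 2 / m ^ 2 := by positivity
        have hqB : (0:ℝ) ≤ 2 / m ^ 2 * B := mul_nonneg hmn hB
        have e1 : (0:ℝ) ≤ (3 + 2 * γ ^ 2 / m ^ 2 + 2 * A + 2 / m ^ 2 * B) * x ^ 2 :=
          mul_nonneg (by linarith) hx
        have e2 : (0:ℝ) ≤ (2 + 2 / m ^ 2 * B) * v ^ 2 := mul_nonneg (by linarith) hv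
        have e3 : (0:ℝ) ≤ (1 + 2 * γ ^ 2 / m ^ 2 + 2 * A) * Z := mul_nonneg (by linarith) hZ0
        nlinarith [e1, e2, e3]
end

section
/- Let α, β > 0 and s ≥ 0 satisfy 2s < αβ, let m, γ > 0, and let Φ : ℝ → ℝ satisfy: Φ ∈ C^∞(ℝ), ∫_ℝ |Φ'(x)| e^{-Φ(x)} dx < ∞, and there exists b > 0 with b(Φ(x)+1) ≥ x² for all x ∈ ℝ. Define Ψ(X) = (1/m)Φ(x) + (1/2)v² + (1/2)∑_{k≥1} k^{-2s} z_k². Then there exist finite constants a₁, a₂ > 0, depending only on m, γ, α, β, s, such that for every x, v ∈ ℝ and every real sequence (z_k)_{k≥1} with ∑_{k≥1} k^{-2s} z_k² < ∞, the quantity L Ψ(X) := −(γ/m) v² − ∑_{k≥1} λ_k k^{-2s} z_k² − (1/m) ∑_{k≥1} √(c_k) z_k v + ∑_{k≥1} √(c_k) k^{-2s} z_k v + γ/m² + ∑_{k≥1} k^{-2s} λ_k satisfies L Ψ(X) ≤ a₁ Ψ(X) + a₂. (This is the Lyapunov drift inequality for the generator of the infinite-dimensional Markovian GLE applied to Ψ.)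 -/
open MeasureTheory Real Filter

set_option maxHeartbeats 1000000

private lemma abs_tsum_le' {f : ℕ → ℝ} (h : Summable fun k => |f k|) :
    |∑' k, f k| ≤ ∑' k, |f k| := by
  have h' : Summable fun k => ‖f k‖ := by simpa only [Real.norm_eq_abs] using h
  simpa only [Real.norm_eq_abs] using norm_tsum_le_tsum_norm h'

private lemma final_ineq (C₁ C₂ u γ Φx v2 S A B T2 K₀ : ℝ)
    (hA2 : -(u * A) ≤ u * (1/2 * (C₁ * v2 + S)))
    (hB1 : B ≤ 1/2 * (C₂ * v2 + S))
    (hT2 : 0 ≤ T2)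
    (hΦterm : 0 ≤ (C₁*u + C₂ + u + 1) * u * (Φx + 1))
    (p1 : 0 ≤ u * v2) (p2 : 0 ≤ C₁*u * S) (p3 : 0 ≤ C₂ * S)
    (p4 : 0 ≤ γ*u * v2) (hv2 : 0 ≤ v2) :
    -(γ*u) * v2 - T2 - u * A + B + γ*u*u + K₀
      ≤ (C₁*u + C₂ + u + 1) * (u * Φx + 1/2 * v2 + 1/2 * S) +
        (γ*u*u + K₀ + (C₁*u + C₂ + u + 1)*u + 1) := by
  linarith

private lemma absmul (u w : ℝ) : |u * w| ≤ (u ^ 2 + w ^ 2) / 2 := by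
  rw [abs_le]
  constructor <;> nlinarith [sq_nonneg (u - w), sq_nonneg (u + w)]

/-- Lyapunov drift inequality `L Ψ ≤ a₁ Ψ + a₂` for the generator of the
infinite-dimensional Markovian GLE, with `c_k = k^{-(1+αβ)}`, `λ_k = k^{-β}`
(modes indexed by `k+1` for `k : ℕ`) and
`Ψ(X) = (1/m)Φ(x) + (1/2)v² + (1/2)∑ k^{-2s} z_k²`. -/
theorem stmt_2 (α β s m γ : ℝ) (hα : 0 < α) (hβ : 0 < β) (hs : 0 ≤ s)
    (h2s : 2 * s < α * β) (hm : 0 < m) (hγ : 0 < γ)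
    (Φ : ℝ → ℝ) (hΦ : ContDiff ℝ (⊤ : ℕ∞) Φ)
    (hΦint : MeasureTheory.Integrable (fun x => |deriv Φ x| * Real.exp (-Φ x)))
    (hΦgrow : ∃ b : ℝ, 0 < b ∧ ∀ x : ℝ, x ^ 2 ≤ b * (Φ x + 1)) :
    ∃ a₁ a₂ : ℝ, 0 < a₁ ∧ 0 < a₂ ∧
      ∀ (x v : ℝ) (z : ℕ → ℝ),
        Summable (fun k : ℕ => ((k : ℝ) + 1) ^ (-(2 * s)) * (z k) ^ 2) →
        -(γ / m) * v ^ 2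
          - (∑' k : ℕ, ((k : ℝ) + 1) ^ (-β) * ((k : ℝ) + 1) ^ (-(2 * s)) * (z k) ^ 2)
          - (1 / m) * (∑' k : ℕ, Real.sqrt (((k : ℝ) + 1) ^ (-(1 + α * β))) * z k * v)
          + (∑' k : ℕ,
              Real.sqrt (((k : ℝ) + 1) ^ (-(1 + α * β))) * ((k : ℝ) + 1) ^ (-(2 * s)) * z k * v)
          + γ / m ^ 2 + (∑' k : ℕ, ((k : ℝ) + 1) ^ (-(2 * s)) * ((k : ℝ) + 1) ^ (-β))
        ≤ a₁ * ((1 / m) * Φ x + (1 / 2) * v ^ 2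
              + (1 / 2) * ∑' k : ℕ, ((k : ℝ) + 1) ^ (-(2 * s)) * (z k) ^ 2) + a₂ := by
  obtain ⟨b, hb, hbx⟩ := hΦgrow
  have hΦ1 : ∀ y : ℝ, (-1 : ℝ) ≤ Φ y := by
    intro y
    nlinarith [hbx y, sq_nonneg y]
  have hpos : ∀ k : ℕ, (0:ℝ) < (k:ℝ) + 1 := fun k => by positivity
  have hsumr : ∀ p : ℝ, p < -1 → Summable (fun k : ℕ => ((k:ℝ)+1) ^ p) := by
    intro p hp
    have h := (Real.summable_nat_rpow (p := p)).mpr hp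
    have h2 := (summable_nat_add_iff (f := fun n : ℕ => (n:ℝ) ^ p) 1).mpr h
    refine h2.congr fun k => ?_
    push_cast
    ring_nf
  have hC₁s : Summable (fun k : ℕ => ((k:ℝ)+1) ^ (-(1 + α*β) + 2*s)) :=
    hsumr _ (by nlinarith)
  have hC₂s : Summable (fun k : ℕ => ((k:ℝ)+1) ^ (-(1 + α*β) - 2*s)) :=
    hsumr _ (by nlinarith)
  set C₁ := ∑' k : ℕ, ((k:ℝ)+1) ^ (-(1 + α*β) + 2*s) with hC₁def
  set C₂ := ∑' k : ℕ, ((k:ℝ)+1) ^ (-(1 + α*β) - 2*s) with hC₂def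
  have hC₁nn : 0 ≤ C₁ := tsum_nonneg fun k => (Real.rpow_pos_of_pos (hpos k) _).le
  have hC₂nn : 0 ≤ C₂ := tsum_nonneg fun k => (Real.rpow_pos_of_pos (hpos k) _).le
  set K₀ := ∑' k : ℕ, ((k : ℝ) + 1) ^ (-(2 * s)) * ((k : ℝ) + 1) ^ (-β) with hK₀def
  have hK₀ : 0 ≤ K₀ := tsum_nonneg fun k => by positivity
  have hminv : (0:ℝ) < 1/m := by positivity
  refine ⟨C₁/m + C₂ + 1/m + 1, γ/m^2 + K₀ + (C₁/m + C₂ + 1/m + 1)/m + 1, ?_, ?_, ?_⟩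
  · have h1 : 0 ≤ C₁/m := div_nonneg hC₁nn hm.le
    linarith
  · have h1 : 0 ≤ C₁/m := div_nonneg hC₁nn hm.le
    have h2 : 0 ≤ γ/m^2 := by positivity
    have h3 : 0 ≤ (C₁/m + C₂ + 1/m + 1)/m := by
      apply div_nonneg _ hm.le
      linarith
    linarith
  intro x v z hz
  set S := ∑' k : ℕ, ((k:ℝ)+1) ^ (-(2*s)) * z k ^ 2 with hSdef
  have hSnn : 0 ≤ S := tsum_nonneg fun k => by positivity
  have hv2 : (0:ℝ) ≤ v^2 := sq_nonneg v
  have hsq : ∀ k : ℕ, Real.sqrt (((k:ℝ)+1) ^ (-(1 + α*β))) = ((k:ℝ)+1) ^ ((-(1 + α*β))/2) := by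
    intro k
    rw [Real.sqrt_eq_rpow, ← Real.rpow_mul (hpos k).le]
    norm_num
    ring_nf
  -- bound for first cross term
  have hAbound : ∀ k : ℕ, |Real.sqrt (((k:ℝ)+1) ^ (-(1 + α*β))) * z k * v| ≤
      (1/2) * (((k:ℝ)+1) ^ (-(1 + α*β) + 2*s) * v^2 + ((k:ℝ)+1) ^ (-(2*s)) * z k ^ 2) := by
    intro k
    have h1 : Real.sqrt (((k:ℝ)+1) ^ (-(1 + α*β))) * z k * v
        = (((k:ℝ)+1) ^ ((-(1 + α*β))/2 + s) * v) * (((k:ℝ)+1) ^ (-s) * z k) := by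
      rw [hsq k, show (-(1 + α*β))/2 = ((-(1 + α*β))/2 + s) + (-s) by ring,
        Real.rpow_add (hpos k)]
      ring
    rw [h1]
    refine (absmul _ _).trans (le_of_eq ?_)
    have e1 : (((k:ℝ)+1) ^ ((-(1 + α*β))/2 + s)) ^ 2 = ((k:ℝ)+1) ^ (-(1 + α*β) + 2*s) := by
      rw [← Real.rpow_natCast (((k:ℝ)+1) ^ ((-(1 + α*β))/2 + s)) 2,
        ← Real.rpow_mul (hpos k).le]
      norm_num
      ring_nf
    have e2 : (((k:ℝ)+1) ^ (-s)) ^ 2 = ((k:ℝ)+1) ^ (-(2*s)) := by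
      rw [← Real.rpow_natCast (((k:ℝ)+1) ^ (-s)) 2, ← Real.rpow_mul (hpos k).le]
      norm_num
      ring_nf
    rw [mul_pow, mul_pow, e1, e2]
    ring
  -- bound for second cross term
  have hBbound : ∀ k : ℕ, |Real.sqrt (((k:ℝ)+1) ^ (-(1 + α*β))) * ((k:ℝ)+1) ^ (-(2*s)) * z k * v| ≤
      (1/2) * (((k:ℝ)+1) ^ (-(1 + α*β) - 2*s) * v^2 + ((k:ℝ)+1) ^ (-(2*s)) * z k ^ 2) := by
    intro k
    have h1 : Real.sqrt (((k:ℝ)+1) ^ (-(1 + α*β))) * ((k:ℝ)+1) ^ (-(2*s)) * z k * v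
        = (((k:ℝ)+1) ^ ((-(1 + α*β))/2 - s) * v) * (((k:ℝ)+1) ^ (-s) * z k) := by
      rw [hsq k, show ((-(1 + α*β))/2 - s) = (-(1 + α*β))/2 + (-s) by ring,
        Real.rpow_add (hpos k), show (-(2*s) : ℝ) = (-s) + (-s) by ring,
        Real.rpow_add (hpos k)]
      ring
    rw [h1]
    refine (absmul _ _).trans (le_of_eq ?_)
    have e1 : (((k:ℝ)+1) ^ ((-(1 + α*β))/2 - s)) ^ 2 = ((k:ℝ)+1) ^ (-(1 + α*β) - 2*s) := by
      rw [← Real.rpow_natCast (((k:ℝ)+1) ^ ((-(1 + α*β))/2 - s)) 2,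
        ← Real.rpow_mul (hpos k).le]
      norm_num
      ring_nf
    have e2 : (((k:ℝ)+1) ^ (-s)) ^ 2 = ((k:ℝ)+1) ^ (-(2*s)) := by
      rw [← Real.rpow_natCast (((k:ℝ)+1) ^ (-s)) 2, ← Real.rpow_mul (hpos k).le]
      norm_num
      ring_nf
    rw [mul_pow, mul_pow, e1, e2]
    ring
  -- summabilities of the dominating series
  have hgA : Summable (fun k : ℕ =>
      (1/2) * (((k:ℝ)+1) ^ (-(1 + α*β) + 2*s) * v^2 + ((k:ℝ)+1) ^ (-(2*s)) * z k ^ 2)) :=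
    ((hC₁s.mul_right (v^2)).add hz).mul_left (1/2)
  have hgB : Summable (fun k : ℕ =>
      (1/2) * (((k:ℝ)+1) ^ (-(1 + α*β) - 2*s) * v^2 + ((k:ℝ)+1) ^ (-(2*s)) * z k ^ 2)) :=
    ((hC₂s.mul_right (v^2)).add hz).mul_left (1/2)
  have hgAsum : ∑' k : ℕ,
      (1/2) * (((k:ℝ)+1) ^ (-(1 + α*β) + 2*s) * v^2 + ((k:ℝ)+1) ^ (-(2*s)) * z k ^ 2)
      = (1/2) * (C₁ * v^2 + S) := by
    rw [tsum_mul_left, Summable.tsum_add (hC₁s.mul_right (v^2)) hz, tsum_mul_right]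
  have hgBsum : ∑' k : ℕ,
      (1/2) * (((k:ℝ)+1) ^ (-(1 + α*β) - 2*s) * v^2 + ((k:ℝ)+1) ^ (-(2*s)) * z k ^ 2)
      = (1/2) * (C₂ * v^2 + S) := by
    rw [tsum_mul_left, Summable.tsum_add (hC₂s.mul_right (v^2)) hz, tsum_mul_right]
  have hfAabs : Summable (fun k : ℕ => |Real.sqrt (((k:ℝ)+1) ^ (-(1 + α*β))) * z k * v|) :=
    hgA.of_nonneg_of_le (fun k => abs_nonneg _) hAbound
  have hfBabs : Summable (fun k : ℕ =>
      |Real.sqrt (((k:ℝ)+1) ^ (-(1 + α*β))) * ((k:ℝ)+1) ^ (-(2*s)) * z k * v|) :=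
    hgB.of_nonneg_of_le (fun k => abs_nonneg _) hBbound
  have hA : |∑' k : ℕ, Real.sqrt (((k:ℝ)+1) ^ (-(1 + α*β))) * z k * v|
      ≤ (1/2) * (C₁ * v^2 + S) := by
    calc |∑' k : ℕ, Real.sqrt (((k:ℝ)+1) ^ (-(1 + α*β))) * z k * v|
        ≤ ∑' k : ℕ, |Real.sqrt (((k:ℝ)+1) ^ (-(1 + α*β))) * z k * v| := by
          exact abs_tsum_le' hfAabs
      _ ≤ _ := hgAsum ▸ Summable.tsum_le_tsum hAbound hfAabs hgA
  have hB : |∑' k : ℕ, Real.sqrt (((k:ℝ)+1) ^ (-(1 + α*β))) * ((k:ℝ)+1) ^ (-(2*s)) * z k * v|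
      ≤ (1/2) * (C₂ * v^2 + S) := by
    calc |∑' k : ℕ, Real.sqrt (((k:ℝ)+1) ^ (-(1 + α*β))) * ((k:ℝ)+1) ^ (-(2*s)) * z k * v|
        ≤ ∑' k : ℕ, |Real.sqrt (((k:ℝ)+1) ^ (-(1 + α*β))) * ((k:ℝ)+1) ^ (-(2*s)) * z k * v| := by
          exact abs_tsum_le' hfBabs
      _ ≤ _ := hgBsum ▸ Summable.tsum_le_tsum hBbound hfBabs hgB
  have hT2 : 0 ≤ ∑' k : ℕ, ((k : ℝ) + 1) ^ (-β) * ((k : ℝ) + 1) ^ (-(2 * s)) * (z k) ^ 2 :=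
    tsum_nonneg fun k => by positivity
  set A := ∑' k : ℕ, Real.sqrt (((k:ℝ)+1) ^ (-(1 + α*β))) * z k * v with hAdef
  set B := ∑' k : ℕ, Real.sqrt (((k:ℝ)+1) ^ (-(1 + α*β))) * ((k:ℝ)+1) ^ (-(2*s)) * z k * v with hBdef
  have hA1 : -A ≤ (1/2) * (C₁ * v^2 + S) := (neg_le_abs A).trans hA
  have hB1 : B ≤ (1/2) * (C₂ * v^2 + S) := (le_abs_self B).trans hB
  have hA2 : -((1/m) * A) ≤ (1/m) * ((1/2) * (C₁ * v^2 + S)) := by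
    have := mul_le_mul_of_nonneg_left hA1 hminv.le
    linarith
  have hΦterm : 0 ≤ (C₁*(1/m) + C₂ + (1/m) + 1) * (1/m) * (Φ x + 1) := by
    apply mul_nonneg
    · apply mul_nonneg _ hminv.le
      have h1 : 0 ≤ C₁ * (1/m) := mul_nonneg hC₁nn hminv.le
      linarith
    · linarith [hΦ1 x]
  have p1 : 0 ≤ (1/m) * v^2 := by positivity
  have p2 : 0 ≤ C₁*(1/m) * S := mul_nonneg (mul_nonneg hC₁nn hminv.le) hSnn
  have p3 : 0 ≤ C₂ * S := mul_nonneg hC₂nn hSnn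
  have p4 : 0 ≤ γ*(1/m) * v^2 := by positivity
  have key := final_ineq C₁ C₂ (1/m) γ (Φ x) (v^2) S A B
    (∑' k : ℕ, ((k : ℝ) + 1) ^ (-β) * ((k : ℝ) + 1) ^ (-(2 * s)) * (z k) ^ 2) K₀
    hA2 hB1 hT2 hΦterm p1 p2 p3 p4 hv2
  calc -(γ / m) * v ^ 2
          - (∑' k : ℕ, ((k : ℝ) + 1) ^ (-β) * ((k : ℝ) + 1) ^ (-(2 * s)) * (z k) ^ 2)
          - (1 / m) * A + B + γ / m ^ 2 + K₀
      = -(γ*(1/m)) * v^2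
          - (∑' k : ℕ, ((k : ℝ) + 1) ^ (-β) * ((k : ℝ) + 1) ^ (-(2 * s)) * (z k) ^ 2)
          - (1/m) * A + B + γ*(1/m)*(1/m) + K₀ := by ring
    _ ≤ (C₁*(1/m) + C₂ + (1/m) + 1) * ((1/m) * Φ x + 1/2 * v^2 + 1/2 * S) +
        (γ*(1/m)*(1/m) + K₀ + (C₁*(1/m) + C₂ + (1/m) + 1)*(1/m) + 1) := key
    _ = (C₁/m + C₂ + 1/m + 1) * ((1/m) * Φ x + (1/2) * v^2 + (1/2) * S) +
        (γ/m^2 + K₀ + (C₁/m + C₂ + 1/m + 1)/m + 1) := by ring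
end

section
/- Let m, γ > 0 and assume the asymptotically diffusive condition (D): α > 1, β > 1/(α−1), and 1/2 < s < (α−1)β/2. Then there exist N ∈ ℕ and a finite constant a > 0 such that for every v ∈ ℝ and every real sequence (z_k)_{k≥1} with ∑_{k≥1} k^{-2s} z_k² < ∞, the quantity −(γ/m) v² − (1/m) ∑_{k=1}^{N} λ_k z_k² − ∑_{k>N} λ_k k^{-2s} z_k² − (1/m) ∑_{k>N} √(c_k) z_k v + ∑_{k>N} √(c_k) k^{-2s} z_k v + γ/m² + (1/m) ∑_{k=1}^{N} λ_k + ∑_{k>N} λ_k k^{-2s} is at most a (uniformly over all such v and (z_k)). (This is the uniform Lyapunov drift bound L Θ ≤ a for the modified Lyapunov function Θ in the diffusive regime.) -/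
open MeasureTheory Real Filter

private lemma quad_bound (A B v z : ℝ) (hA : 0 < A) :
    -A * z ^ 2 + B * z * v ≤ B ^ 2 / (4 * A) * v ^ 2 := by
  rw [div_mul_eq_mul_div, le_div_iff₀ (by linarith)]
  nlinarith [sq_nonneg (B * v - 2 * A * z)]

private lemma sum_shift_rpow (p : ℝ) (hp : 1 < p) :
    Summable (fun k : ℕ => ((k : ℝ) + 1) ^ (-p)) := by
  have h : Summable (fun n : ℕ => ((n : ℝ)) ^ (-p)) :=
    Real.summable_nat_rpow.2 (by linarith)
  have := (summable_nat_add_iff (f := fun n : ℕ => ((n : ℝ)) ^ (-p)) 1).2 h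
  exact this.congr fun k => by push_cast; ring_nf

/-- Uniform Lyapunov drift bound `L Θ ≤ a` in the asymptotically diffusive regime (D):
`α > 1`, `β > 1/(α-1)`, `1/2 < s < (α-1)β/2`.  Here `c_j = j^{-(1+αβ)}`, `λ_j = j^{-β}`,
the mode `j = k+1` corresponds to `z k`; the finite sum runs over modes `1,…,N` and the
tail sums over modes `j > N` (i.e. `z (k+N)` with mode `j = k+N+1`). -/
theorem stmt_3 (α β s m γ : ℝ) (hm : 0 < m) (hγ : 0 < γ)
    (hα : 1 < α) (hβ : 1 / (α - 1) < β) (hs₁ : 1 / 2 < s) (hs₂ : s < (α - 1) * β / 2) :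
    ∃ N : ℕ, ∃ a : ℝ, 0 < a ∧
      ∀ (v : ℝ) (z : ℕ → ℝ),
        Summable (fun k : ℕ => ((k : ℝ) + 1) ^ (-(2 * s)) * (z k) ^ 2) →
        -(γ / m) * v ^ 2
          - (1 / m) * (∑ k ∈ Finset.range N, ((k : ℝ) + 1) ^ (-β) * (z k) ^ 2)
          - (∑' k : ℕ, ((k : ℝ) + (N : ℝ) + 1) ^ (-β) * ((k : ℝ) + (N : ℝ) + 1) ^ (-(2 * s))
              * (z (k + N)) ^ 2)
          - (1 / m) * (∑' k : ℕ,
              Real.sqrt (((k : ℝ) + (N : ℝ) + 1) ^ (-(1 + α * β))) * z (k + N) * v)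
          + (∑' k : ℕ, Real.sqrt (((k : ℝ) + (N : ℝ) + 1) ^ (-(1 + α * β)))
              * ((k : ℝ) + (N : ℝ) + 1) ^ (-(2 * s)) * z (k + N) * v)
          + γ / m ^ 2 + (1 / m) * (∑ k ∈ Finset.range N, ((k : ℝ) + 1) ^ (-β))
          + (∑' k : ℕ, ((k : ℝ) + (N : ℝ) + 1) ^ (-β) * ((k : ℝ) + (N : ℝ) + 1) ^ (-(2 * s)))
        ≤ a := by
  have hβpos : 0 < β := lt_trans (one_div_pos.2 (by linarith)) hβ
  have hspos : 0 < s := by linarith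
  set θ : ℝ := 1 + (α - 1) * β - 2 * s with hθdef
  have hθ : 1 < θ := by nlinarith
  set C : ℝ := (1 / m + 1) ^ 2 / 4 with hCdef
  have hC : 0 < C := by positivity
  set K0 : ℕ → ℝ := fun j => C * ((j : ℝ) + 1) ^ (-θ) with hK0def
  have hK0 : Summable K0 := (sum_shift_rpow θ hθ).mul_left C
  obtain ⟨N, hN⟩ : ∃ N : ℕ, (∑' k : ℕ, K0 (k + N)) ≤ γ / m := by
    have h := tendsto_sum_nat_add K0
    exact (h.eventually (eventually_le_nhds (by positivity : (0:ℝ) < γ / m))).exists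
  set J : ℕ → ℝ := fun k => (k : ℝ) + (N : ℝ) + 1 with hJdef
  have hJ1 : ∀ k : ℕ, 1 ≤ J k := by
    intro k
    have : (0:ℝ) ≤ (k : ℝ) + (N : ℝ) := by positivity
    simp only [hJdef]; linarith
  have hJ0 : ∀ k : ℕ, 0 < J k := fun k => lt_of_lt_of_le one_pos (hJ1 k)
  have hle1 : ∀ (k : ℕ) (p : ℝ), p ≤ 0 → J k ^ p ≤ 1 := fun k p hp =>
    Real.rpow_le_one_of_one_le_of_nonpos (hJ1 k) hp
  have hsqrtc : ∀ k : ℕ, Real.sqrt (J k ^ (-(1 + α * β))) = J k ^ (-(1 + α * β) / 2) := by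
    intro k
    rw [Real.sqrt_eq_rpow, ← Real.rpow_mul (hJ0 k).le]
    congr 1; ring
  have hcast : ∀ k : ℕ, ((k + N : ℕ) : ℝ) + 1 = J k := by
    intro k; simp only [hJdef]; push_cast; ring
  -- tail of constants summable
  have hT4 : Summable (fun k : ℕ => J k ^ (-β) * J k ^ (-(2 * s))) := by
    have h2s : Summable (fun k : ℕ => J k ^ (-(2 * s))) := by
      have := (summable_nat_add_iff (f := fun n : ℕ => ((n : ℝ) + 1) ^ (-(2 * s))) N).2
        (sum_shift_rpow (2 * s) (by linarith))
      exact this.congr fun k => by rw [hcast k]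
    refine Summable.of_nonneg_of_le (fun k => by positivity) (fun k => ?_) h2s
    calc J k ^ (-β) * J k ^ (-(2 * s)) ≤ 1 * J k ^ (-(2 * s)) :=
          mul_le_mul_of_nonneg_right (hle1 k _ (by linarith)) (by positivity)
      _ = J k ^ (-(2 * s)) := one_mul _
  have hT4nn : (0:ℝ) ≤ ∑' k : ℕ, J k ^ (-β) * J k ^ (-(2 * s)) :=
    tsum_nonneg fun k => by positivity
  refine ⟨N, γ / m ^ 2 + (1 / m) * (∑ k ∈ Finset.range N, ((k : ℝ) + 1) ^ (-β))
    + (∑' k : ℕ, J k ^ (-β) * J k ^ (-(2 * s))), ?_, ?_⟩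
  · have h1 : (0:ℝ) ≤ (1 / m) * (∑ k ∈ Finset.range N, ((k : ℝ) + 1) ^ (-β)) := by
      apply mul_nonneg (by positivity)
      exact Finset.sum_nonneg fun k _ => by positivity
    have h2 : (0:ℝ) < γ / m ^ 2 := by positivity
    linarith
  intro v z hz
  have hz' : Summable (fun k : ℕ => J k ^ (-(2 * s)) * z (k + N) ^ 2) := by
    have := (summable_nat_add_iff
      (f := fun n : ℕ => ((n : ℝ) + 1) ^ (-(2 * s)) * z n ^ 2) N).2 hz
    exact this.congr fun k => by rw [hcast k]
  have hT1 : Summable (fun k : ℕ => J k ^ (-β) * J k ^ (-(2 * s)) * z (k + N) ^ 2) := by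
    refine Summable.of_nonneg_of_le (fun k => by positivity) (fun k => ?_) hz'
    calc J k ^ (-β) * J k ^ (-(2 * s)) * z (k + N) ^ 2
        = J k ^ (-β) * (J k ^ (-(2 * s)) * z (k + N) ^ 2) := by ring
      _ ≤ 1 * (J k ^ (-(2 * s)) * z (k + N) ^ 2) :=
          mul_le_mul_of_nonneg_right (hle1 k _ (by linarith)) (by positivity)
      _ = _ := one_mul _
  have hcross : Summable (fun k : ℕ =>
      Real.sqrt (J k ^ (-(1 + α * β))) * z (k + N) * v) := by
    rw [← summable_abs_iff]
    have hdom : Summable (fun k : ℕ =>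
        |v| * (J k ^ (-(1 + α * β) + 2 * s) / 2 + J k ^ (-(2 * s)) * z (k + N) ^ 2 / 2)) := by
      apply Summable.mul_left
      apply Summable.add
      · apply Summable.div_const
        have hexp : 1 < (1 + α * β) - 2 * s := by nlinarith
        have := (summable_nat_add_iff
          (f := fun n : ℕ => ((n : ℝ) + 1) ^ (-((1 + α * β) - 2 * s))) N).2
          (sum_shift_rpow _ hexp)
        refine this.congr fun k => ?_
        rw [hcast k, show (-((1 + α * β) - 2 * s) : ℝ) = -(1 + α * β) + 2 * s from by ring]
      · exact hz'.div_const 2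
    refine Summable.of_nonneg_of_le (fun k => abs_nonneg _) (fun k => ?_) hdom
    rw [hsqrtc k, abs_mul, abs_mul, abs_of_nonneg (Real.rpow_nonneg (hJ0 k).le _)]
    have hsplit : J k ^ (-(1 + α * β) / 2)
        = J k ^ ((-(1 + α * β) + 2 * s) / 2) * J k ^ (-s) := by
      rw [← Real.rpow_add (hJ0 k)]; congr 1; ring
    rw [hsplit]
    have hx := Real.rpow_nonneg (hJ0 k).le ((-(1 + α * β) + 2 * s) / 2)
    have hy := Real.rpow_nonneg (hJ0 k).le (-s)
    have hx2 : (J k ^ ((-(1 + α * β) + 2 * s) / 2)) ^ 2 = J k ^ (-(1 + α * β) + 2 * s) := by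
      rw [← Real.rpow_natCast (J k ^ ((-(1 + α * β) + 2 * s) / 2)) 2,
        ← Real.rpow_mul (hJ0 k).le]
      congr 1; push_cast; ring
    have hy2 : (J k ^ (-s)) ^ 2 = J k ^ (-(2 * s)) := by
      rw [← Real.rpow_natCast (J k ^ (-s)) 2, ← Real.rpow_mul (hJ0 k).le]
      congr 1; push_cast; ring
    have hamgm : J k ^ ((-(1 + α * β) + 2 * s) / 2) * (J k ^ (-s) * |z (k + N)|)
        ≤ J k ^ (-(1 + α * β) + 2 * s) / 2 + J k ^ (-(2 * s)) * z (k + N) ^ 2 / 2 := by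
      nlinarith [sq_nonneg (J k ^ ((-(1 + α * β) + 2 * s) / 2) - J k ^ (-s) * |z (k + N)|),
        sq_abs (z (k + N))]
    calc J k ^ ((-(1 + α * β) + 2 * s) / 2) * J k ^ (-s) * |z (k + N)| * |v|
        = |v| * (J k ^ ((-(1 + α * β) + 2 * s) / 2) * (J k ^ (-s) * |z (k + N)|)) := by ring
      _ ≤ |v| * (J k ^ (-(1 + α * β) + 2 * s) / 2 + J k ^ (-(2 * s)) * z (k + N) ^ 2 / 2) :=
          mul_le_mul_of_nonneg_left hamgm (abs_nonneg v)
  have hT3 : Summable (fun k : ℕ =>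
      Real.sqrt (J k ^ (-(1 + α * β))) * J k ^ (-(2 * s)) * z (k + N) * v) := by
    rw [← summable_abs_iff]
    refine Summable.of_nonneg_of_le (fun k => abs_nonneg _) (fun k => ?_) hcross.abs
    have h2 : |J k ^ (-(2 * s))| ≤ 1 := by
      rw [abs_of_nonneg (by positivity)]; exact hle1 k _ (by linarith)
    calc |Real.sqrt (J k ^ (-(1 + α * β))) * J k ^ (-(2 * s)) * z (k + N) * v|
        = |Real.sqrt (J k ^ (-(1 + α * β))) * z (k + N) * v| * |J k ^ (-(2 * s))| := by
          rw [← abs_mul]; congr 1; ring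
      _ ≤ |Real.sqrt (J k ^ (-(1 + α * β))) * z (k + N) * v| * 1 :=
          mul_le_mul_of_nonneg_left h2 (abs_nonneg _)
      _ = _ := mul_one _
  have hK : Summable (fun k : ℕ => K0 (k + N)) := (summable_nat_add_iff N).2 hK0
  have hpt : ∀ k : ℕ,
      -(J k ^ (-β) * J k ^ (-(2 * s)) * z (k + N) ^ 2)
      - (1 / m) * (Real.sqrt (J k ^ (-(1 + α * β))) * z (k + N) * v)
      + Real.sqrt (J k ^ (-(1 + α * β))) * J k ^ (-(2 * s)) * z (k + N) * v
      ≤ K0 (k + N) * v ^ 2 := by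
    intro k
    have hA : 0 < J k ^ (-β) * J k ^ (-(2 * s)) := by
      apply mul_pos <;> exact Real.rpow_pos_of_pos (hJ0 k) _
    have hLHS : -(J k ^ (-β) * J k ^ (-(2 * s)) * z (k + N) ^ 2)
        - (1 / m) * (Real.sqrt (J k ^ (-(1 + α * β))) * z (k + N) * v)
        + Real.sqrt (J k ^ (-(1 + α * β))) * J k ^ (-(2 * s)) * z (k + N) * v
        = -(J k ^ (-β) * J k ^ (-(2 * s))) * z (k + N) ^ 2
          + ((J k ^ (-(2 * s)) - 1 / m) * Real.sqrt (J k ^ (-(1 + α * β)))) * z (k + N) * v := by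
      ring
    rw [hLHS]
    refine le_trans (quad_bound _ _ v (z (k + N)) hA) ?_
    have hBsq : ((J k ^ (-(2 * s)) - 1 / m) * Real.sqrt (J k ^ (-(1 + α * β)))) ^ 2
        ≤ (1 / m + 1) ^ 2 * J k ^ (-(1 + α * β)) := by
      rw [mul_pow, Real.sq_sqrt (by positivity)]
      have h2 : 0 ≤ J k ^ (-(2 * s)) := by positivity
      have h3 : J k ^ (-(2 * s)) ≤ 1 := hle1 k _ (by linarith)
      have hminv : 0 < 1 / m := by positivity
      have h4 : (J k ^ (-(2 * s)) - 1 / m) ^ 2 ≤ (1 / m + 1) ^ 2 := by nlinarith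
      exact mul_le_mul_of_nonneg_right h4 (by positivity)
    have hKval : K0 (k + N)
        = (1 / m + 1) ^ 2 * J k ^ (-(1 + α * β)) / (4 * (J k ^ (-β) * J k ^ (-(2 * s)))) := by
      have key : J k ^ (-(1 + α * β)) = J k ^ (-θ) * (J k ^ (-β) * J k ^ (-(2 * s))) := by
        rw [← Real.rpow_add (hJ0 k), ← Real.rpow_add (hJ0 k)]
        congr 1
        rw [hθdef]; ring
      simp only [hK0def]
      rw [hcast k, hCdef, key]
      have h1 : J k ^ (-β) ≠ 0 := ne_of_gt (Real.rpow_pos_of_pos (hJ0 k) _)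
      have h2 : J k ^ (-(2 * s)) ≠ 0 := ne_of_gt (Real.rpow_pos_of_pos (hJ0 k) _)
      field_simp
    rw [hKval]
    have h4A : (0:ℝ) < 4 * (J k ^ (-β) * J k ^ (-(2 * s))) := by linarith
    exact mul_le_mul_of_nonneg_right ((div_le_div_iff_of_pos_right h4A).2 hBsq) (sq_nonneg v)
  have hcombo : Summable (fun k : ℕ =>
      -(J k ^ (-β) * J k ^ (-(2 * s)) * z (k + N) ^ 2)
      - (1 / m) * (Real.sqrt (J k ^ (-(1 + α * β))) * z (k + N) * v)
      + Real.sqrt (J k ^ (-(1 + α * β))) * J k ^ (-(2 * s)) * z (k + N) * v) :=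
    ((hT1.neg).sub (hcross.mul_left (1 / m))).add hT3
  have hsum_le : (∑' k : ℕ,
      (-(J k ^ (-β) * J k ^ (-(2 * s)) * z (k + N) ^ 2)
      - (1 / m) * (Real.sqrt (J k ^ (-(1 + α * β))) * z (k + N) * v)
      + Real.sqrt (J k ^ (-(1 + α * β))) * J k ^ (-(2 * s)) * z (k + N) * v))
      ≤ (∑' k : ℕ, K0 (k + N)) * v ^ 2 := by
    rw [← tsum_mul_right]
    exact Summable.tsum_le_tsum hpt hcombo (hK.mul_right _)
  have hsplit : (∑' k : ℕ,
      (-(J k ^ (-β) * J k ^ (-(2 * s)) * z (k + N) ^ 2)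
      - (1 / m) * (Real.sqrt (J k ^ (-(1 + α * β))) * z (k + N) * v)
      + Real.sqrt (J k ^ (-(1 + α * β))) * J k ^ (-(2 * s)) * z (k + N) * v))
      = -(∑' k : ℕ, J k ^ (-β) * J k ^ (-(2 * s)) * z (k + N) ^ 2)
      - (1 / m) * (∑' k : ℕ, Real.sqrt (J k ^ (-(1 + α * β))) * z (k + N) * v)
      + (∑' k : ℕ, Real.sqrt (J k ^ (-(1 + α * β))) * J k ^ (-(2 * s)) * z (k + N) * v) := by
    rw [Summable.tsum_add ((hT1.neg).sub (hcross.mul_left (1 / m))) hT3,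
      Summable.tsum_sub hT1.neg (hcross.mul_left (1 / m)), tsum_neg, tsum_mul_left]
  have hmain : -(∑' k : ℕ, J k ^ (-β) * J k ^ (-(2 * s)) * z (k + N) ^ 2)
      - (1 / m) * (∑' k : ℕ, Real.sqrt (J k ^ (-(1 + α * β))) * z (k + N) * v)
      + (∑' k : ℕ, Real.sqrt (J k ^ (-(1 + α * β))) * J k ^ (-(2 * s)) * z (k + N) * v)
      ≤ (γ / m) * v ^ 2 := by
    rw [← hsplit]
    refine hsum_le.trans ?_
    exact mul_le_mul_of_nonneg_right hN (sq_nonneg v)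
  have hS1 : (0:ℝ) ≤ (1 / m) * (∑ k ∈ Finset.range N, ((k : ℝ) + 1) ^ (-β) * (z k) ^ 2) := by
    apply mul_nonneg (by positivity)
    exact Finset.sum_nonneg fun k _ => by positivity
  simp only [hJdef] at hmain
  linarith
end

section
/- Let α, β > 0, set c_k = k^{-(1+αβ)} and λ_k = k^{-β} for k ≥ 1, and define K(t) = ∑_{k≥1} c_k e^{-λ_k t} for t > 0. Then lim_{t→∞} t^α K(t) = Γ(α)/β, where Γ is the Gamma function. In particular K(t) ∼ t^{-α} as t → ∞, i.e. the memory kernel has a power-law tail of exponent α. -/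
open MeasureTheory Real Filter Set

noncomputable def xm (α β t : ℝ) : ℝ := (β * t / (1 + α * β)) ^ (β⁻¹)

lemma aux_xm_rpow {α β t : ℝ} (hα : 0 < α) (hβ : 0 < β) (ht : 0 < t) :
    (xm α β t) ^ (-β) = (1 + α * β) / (β * t) := by
  have hA : (0:ℝ) < β * t / (1 + α * β) := by positivity
  unfold xm
  rw [← Real.rpow_mul hA.le]
  rw [show β⁻¹ * -β = -1 by field_simp]
  rw [Real.rpow_neg_one, inv_div]

lemma aux_sign_le {α β t x : ℝ} (hα : 0 < α) (hβ : 0 < β) (ht : 0 < t) (hx : 0 < x)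
    (h : x ≤ xm α β t) : 1 + α * β ≤ β * t * x ^ (-β) := by
  have h1 := Real.rpow_le_rpow_of_nonpos hx h (neg_nonpos.2 hβ.le)
  rw [aux_xm_rpow hα hβ ht] at h1
  have hbt : (0:ℝ) < β * t := by positivity
  calc 1 + α * β = β * t * ((1 + α * β) / (β * t)) := by field_simp
    _ ≤ β * t * x ^ (-β) := by gcongr

lemma aux_sign_ge {α β t x : ℝ} (hα : 0 < α) (hβ : 0 < β) (ht : 0 < t) (hx : 0 < x)
    (h : xm α β t ≤ x) : β * t * x ^ (-β) ≤ 1 + α * β := by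
  have hxm : 0 < xm α β t := by unfold xm; positivity
  have h1 := Real.rpow_le_rpow_of_nonpos hxm h (neg_nonpos.2 hβ.le)
  rw [aux_xm_rpow hα hβ ht] at h1
  have hbt : (0:ℝ) < β * t := by positivity
  calc β * t * x ^ (-β) ≤ β * t * ((1 + α * β) / (β * t)) := by gcongr
    _ = 1 + α * β := by field_simp

lemma aux_hasDerivAt {α β : ℝ} (hα : 0 < α) (hβ : 0 < β) (t : ℝ) {x : ℝ} (hx : 0 < x) :
    HasDerivAt (fun x : ℝ => x ^ (-(1 + α * β)) * Real.exp (-x ^ (-β) * t))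
      (x ^ (-(1 + α * β) - 1) * Real.exp (-x ^ (-β) * t) * (β * t * x ^ (-β) - (1 + α * β))) x := by
  have h1 : HasDerivAt (fun x : ℝ => x ^ (-(1 + α * β)))
      (-(1 + α * β) * x ^ (-(1 + α * β) - 1)) x :=
    Real.hasDerivAt_rpow_const (Or.inl hx.ne')
  have h2 : HasDerivAt (fun x : ℝ => -x ^ (-β) * t)
      (-( -β * x ^ (-β - 1)) * t) x :=
    ((Real.hasDerivAt_rpow_const (p := -β) (Or.inl hx.ne')).neg).mul_const t
  have h3 := (h2.exp)
  have h4 : HasDerivAt (fun x : ℝ => x ^ (-(1 + α * β)) * Real.exp (-x ^ (-β) * t)) _ x :=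
    h1.mul h3
  convert h4 using 1
  have e1 : x ^ (-(1 + α * β) - 1) * x ^ (-β) = x ^ (-(1 + α * β)) * x ^ (-β - 1) := by
    rw [← Real.rpow_add hx, ← Real.rpow_add hx]; ring_nf
  linear_combination (β * t * Real.exp (-x ^ (-β) * t)) * e1

lemma aux_cont {α β : ℝ} (t : ℝ) {s : Set ℝ} (hs : ∀ x ∈ s, (0:ℝ) < x) :
    ContinuousOn (fun x : ℝ => x ^ (-(1 + α * β)) * Real.exp (-x ^ (-β) * t)) s := by
  have h1 : ContinuousOn (fun x : ℝ => x ^ (-(1 + α * β))) s :=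
    ContinuousOn.rpow_const continuousOn_id (fun x hx => Or.inl (hs x hx).ne')
  have h2 : ContinuousOn (fun x : ℝ => x ^ (-β)) s :=
    ContinuousOn.rpow_const continuousOn_id (fun x hx => Or.inl (hs x hx).ne')
  exact h1.mul ((h2.neg.mul continuousOn_const).rexp)

lemma aux_mono {α β t a b : ℝ} (hα : 0 < α) (hβ : 0 < β) (ht : 0 < t) (ha : 0 < a)
    (hb : b ≤ xm α β t) :
    MonotoneOn (fun x : ℝ => x ^ (-(1 + α * β)) * Real.exp (-x ^ (-β) * t)) (Icc a b) := by
  have hpos : ∀ x ∈ Icc a b, (0:ℝ) < x := fun x hx => lt_of_lt_of_le ha hx.1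
  apply monotoneOn_of_deriv_nonneg (convex_Icc a b) (aux_cont t hpos)
  · intro x hx
    rw [interior_Icc] at hx
    exact (aux_hasDerivAt hα hβ t (ha.trans hx.1)).differentiableAt.differentiableWithinAt
  · intro x hx
    rw [interior_Icc] at hx
    have hx0 : 0 < x := ha.trans hx.1
    rw [(aux_hasDerivAt hα hβ t hx0).deriv]
    have := aux_sign_le hα hβ ht hx0 (hx.2.le.trans hb)
    have h1 : (0:ℝ) ≤ x ^ (-(1 + α * β) - 1) := (Real.rpow_pos_of_pos hx0 _).le
    have h2 : (0:ℝ) ≤ Real.exp (-x ^ (-β) * t) := (Real.exp_pos _).le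
    exact mul_nonneg (mul_nonneg h1 h2) (sub_nonneg.2 this)

lemma aux_anti {α β t a b : ℝ} (hα : 0 < α) (hβ : 0 < β) (ht : 0 < t) (ha : 0 < a)
    (hxm : xm α β t ≤ a) :
    AntitoneOn (fun x : ℝ => x ^ (-(1 + α * β)) * Real.exp (-x ^ (-β) * t)) (Icc a b) := by
  have hpos : ∀ x ∈ Icc a b, (0:ℝ) < x := fun x hx => lt_of_lt_of_le ha hx.1
  apply antitoneOn_of_deriv_nonpos (convex_Icc a b) (aux_cont t hpos)
  · intro x hx
    rw [interior_Icc] at hx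
    exact (aux_hasDerivAt hα hβ t (ha.trans hx.1)).differentiableAt.differentiableWithinAt
  · intro x hx
    rw [interior_Icc] at hx
    have hx0 : 0 < x := ha.trans hx.1
    rw [(aux_hasDerivAt hα hβ t hx0).deriv]
    have := aux_sign_ge hα hβ ht hx0 (hxm.trans hx.1.le)
    have h1 : (0:ℝ) ≤ x ^ (-(1 + α * β) - 1) := (Real.rpow_pos_of_pos hx0 _).le
    have h2 : (0:ℝ) ≤ Real.exp (-x ^ (-β) * t) := (Real.exp_pos _).le
    exact mul_nonpos_of_nonneg_of_nonpos (mul_nonneg h1 h2) (sub_nonpos.2 this)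

lemma aux_exp_le_one {β t x : ℝ} (hβ : 0 < β) (ht : 0 ≤ t) (hx : 0 < x) :
    Real.exp (-x ^ (-β) * t) ≤ 1 := by
  rw [Real.exp_le_one_iff]
  have := (Real.rpow_pos_of_pos hx (-β)).le
  nlinarith

lemma aux_bound {α β t x : ℝ} (hα : 0 < α) (hβ : 0 < β) (ht : 0 < t) (hxm : 1 ≤ xm α β t)
    (hx : 1 ≤ x) :
    x ^ (-(1 + α * β)) * Real.exp (-x ^ (-β) * t) ≤ (xm α β t) ^ (-(1 + α * β)) := by
  have hx0 : (0:ℝ) < x := lt_of_lt_of_le one_pos hx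
  have hxm0 : (0:ℝ) < xm α β t := lt_of_lt_of_le one_pos hxm
  rcases le_total x (xm α β t) with h | h
  · calc x ^ (-(1 + α * β)) * Real.exp (-x ^ (-β) * t)
        ≤ (xm α β t) ^ (-(1 + α * β)) * Real.exp (-(xm α β t) ^ (-β) * t) :=
          aux_mono hα hβ ht one_pos le_rfl ⟨hx, h⟩ ⟨hxm, le_rfl⟩ h
      _ ≤ (xm α β t) ^ (-(1 + α * β)) * 1 := by
          have := aux_exp_le_one (x := xm α β t) hβ ht.le hxm0
          have := (Real.rpow_pos_of_pos hxm0 (-(1 + α * β))).le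
          nlinarith
      _ = (xm α β t) ^ (-(1 + α * β)) := mul_one _
  · calc x ^ (-(1 + α * β)) * Real.exp (-x ^ (-β) * t)
        ≤ x ^ (-(1 + α * β)) * 1 := by
          have := aux_exp_le_one (x := x) hβ ht.le hx0
          have := (Real.rpow_pos_of_pos hx0 (-(1 + α * β))).le
          nlinarith
      _ = x ^ (-(1 + α * β)) := mul_one _
      _ ≤ (xm α β t) ^ (-(1 + α * β)) :=
          Real.rpow_le_rpow_of_nonpos hxm0 h (by nlinarith)

lemma aux_integrable {α β t : ℝ} (hα : 0 < α) (hβ : 0 < β) (ht : 0 ≤ t) {c : ℝ} (hc : 1 ≤ c) :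
    IntegrableOn (fun x : ℝ => x ^ (-(1 + α * β)) * Real.exp (-x ^ (-β) * t)) (Ioi c) := by
  have hc0 : (0:ℝ) < c := lt_of_lt_of_le one_pos hc
  apply Integrable.mono' (g := fun x : ℝ => x ^ (-(1 + α * β)))
    (integrableOn_Ioi_rpow_of_lt (by nlinarith) hc0)
  · exact (aux_cont t (fun x hx => hc0.trans hx)).aestronglyMeasurable measurableSet_Ioi
  · refine (ae_restrict_iff' measurableSet_Ioi).2 (ae_of_all _ fun x hx => ?_)
    have hx0 : (0:ℝ) < x := hc0.trans hx
    have h1 := aux_exp_le_one (x := x) hβ ht hx0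
    have h2 := (Real.rpow_pos_of_pos hx0 (-(1 + α * β))).le
    have h3 := (Real.exp_pos (-x ^ (-β) * t)).le
    rw [Real.norm_eq_abs, abs_of_nonneg (by nlinarith)]
    nlinarith

lemma aux_summable {α β t : ℝ} (hα : 0 < α) (hβ : 0 < β) (ht : 0 ≤ t) :
    Summable (fun k : ℕ => ((k : ℝ) + 1) ^ (-(1 + α * β)) * Real.exp (-((k : ℝ) + 1) ^ (-β) * t)) := by
  have hs : Summable (fun k : ℕ => ((k : ℝ) + 1) ^ (-(1 + α * β))) := by
    have h0 : Summable (fun n : ℕ => (n : ℝ) ^ (-(1 + α * β))) :=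
      (Real.summable_nat_rpow (p := -(1 + α * β))).2 (by nlinarith)
    have := (summable_nat_add_iff (f := fun n : ℕ => (n : ℝ) ^ (-(1 + α * β))) 1).2 h0
    refine this.congr fun k => ?_
    push_cast
    ring_nf
  apply Summable.of_nonneg_of_le (fun k => by positivity) (fun k => ?_) hs
  have hk0 : (0:ℝ) < (k:ℝ) + 1 := by positivity
  have h1 := aux_exp_le_one (x := (k:ℝ)+1) hβ ht hk0
  have h2 := (Real.rpow_pos_of_pos hk0 (-(1 + α * β))).le
  nlinarith
lemma aux_subst {α β t : ℝ} (hα : 0 < α) (hβ : 0 < β) (ht : 0 < t) :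
    ∫ u in Ioo 0 t, u ^ (α - 1) * Real.exp (-u)
      = β * t ^ α * ∫ x in Ioi 1, x ^ (-(1 + α * β)) * Real.exp (-x ^ (-β) * t) := by
  have himg : (fun x : ℝ => t * x ^ (-β)) '' (Ioi 1) = Ioo 0 t := by
    ext u
    constructor
    · rintro ⟨x, hx, rfl⟩
      have hx1 : (1:ℝ) < x := hx
      have h1 : (0:ℝ) < x ^ (-β) := Real.rpow_pos_of_pos (by linarith) _
      have h2 : x ^ (-β) < 1 := Real.rpow_lt_one_of_one_lt_of_neg hx1 (by linarith)
      constructor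
      · positivity
      · show t * x ^ (-β) < t
        nlinarith
    · rintro ⟨hu0, hut⟩
      refine ⟨(t / u) ^ (β⁻¹), ?_, ?_⟩
      · have htu : (1:ℝ) < t / u := (one_lt_div hu0).2 hut
        exact mem_Ioi.2 ((Real.one_lt_rpow_iff_of_pos (by linarith)).2
          (Or.inl ⟨htu, by positivity⟩))
      · have htu : (0:ℝ) ≤ t / u := by positivity
        show t * ((t / u) ^ β⁻¹) ^ (-β) = u
        rw [← Real.rpow_mul htu, show β⁻¹ * -β = -1 by field_simp, Real.rpow_neg_one,
          inv_div]
        field_simp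
  have hderiv : ∀ x ∈ Ioi (1:ℝ), HasDerivWithinAt (fun x : ℝ => t * x ^ (-β))
      (t * (-β * x ^ (-β - 1))) (Ioi 1) x := by
    intro x hx
    exact ((Real.hasDerivAt_rpow_const (p := -β)
      (Or.inl (lt_trans one_pos hx).ne')).const_mul t).hasDerivWithinAt
  have hinj : InjOn (fun x : ℝ => t * x ^ (-β)) (Ioi 1) := by
    have : StrictAntiOn (fun x : ℝ => t * x ^ (-β)) (Ioi 1) := by
      intro x hx y hy hxy
      have h1 : y ^ (-β) < x ^ (-β) :=
        Real.rpow_lt_rpow_of_neg (lt_trans one_pos hx) hxy (by linarith)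
      exact (mul_lt_mul_iff_right₀ ht).2 h1
    exact this.injOn
  rw [← himg, integral_image_eq_integral_abs_deriv_smul measurableSet_Ioi hderiv hinj]
  rw [← MeasureTheory.integral_const_mul]
  refine setIntegral_congr_fun measurableSet_Ioi fun x hx => ?_
  have hx0 : (0:ℝ) < x := lt_trans one_pos hx
  have hb : (0:ℝ) < x ^ (-β) := Real.rpow_pos_of_pos hx0 _
  have habs : |t * (-β * x ^ (-β - 1))| = t * β * x ^ (-β - 1) := by
    rw [abs_of_nonpos ?_]
    · ring
    · have h5 := (Real.rpow_pos_of_pos hx0 (-β - 1)).le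
      nlinarith [mul_nonneg (mul_nonneg ht.le hβ.le) h5]
  rw [smul_eq_mul, habs]
  have hmul : (t * x ^ (-β)) ^ (α - 1) = t ^ (α - 1) * x ^ (-β * (α - 1)) := by
    rw [Real.mul_rpow ht.le hb.le, Real.rpow_mul hx0.le]
  rw [hmul]
  have hexp : Real.exp (-(t * x ^ (-β))) = Real.exp (-x ^ (-β) * t) := by ring_nf
  rw [hexp]
  have hts : t * t ^ (α - 1) = t ^ α := by
    have h6 := Real.rpow_add ht 1 (α - 1)
    rw [Real.rpow_one] at h6
    rw [← h6]; norm_num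
  have hxs : x ^ (-β - 1) * x ^ (-β * (α - 1)) = x ^ (-(1 + α * β)) := by
    rw [← Real.rpow_add hx0]
    ring_nf
  calc t * β * x ^ (-β - 1) * (t ^ (α - 1) * x ^ (-β * (α - 1)) * Real.exp (-x ^ (-β) * t))
      = β * (t * t ^ (α - 1)) * (x ^ (-β - 1) * x ^ (-β * (α - 1))) * Real.exp (-x ^ (-β) * t) := by
        ring
    _ = β * t ^ α * (x ^ (-(1 + α * β)) * Real.exp (-x ^ (-β) * t)) := by
        rw [hts, hxs]; ring

lemma aux_gamma {α : ℝ} (hα : 0 < α) :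
    Tendsto (fun t : ℝ => ∫ u in Ioo 0 t, u ^ (α - 1) * Real.exp (-u)) atTop
      (nhds (Real.Gamma α)) := by
  have h1 : Tendsto (fun t : ℝ => ∫ u in (0:ℝ)..t, Real.exp (-u) * u ^ (α - 1)) atTop
      (nhds (∫ u in Ioi (0:ℝ), Real.exp (-u) * u ^ (α - 1))) :=
    intervalIntegral_tendsto_integral_Ioi 0 (Real.GammaIntegral_convergent hα) tendsto_id
  rw [← Real.Gamma_eq_integral hα] at h1
  refine h1.congr' ?_
  filter_upwards [eventually_ge_atTop (0:ℝ)] with t ht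
  rw [intervalIntegral.integral_of_le ht, integral_Ioc_eq_integral_Ioo]
  exact setIntegral_congr_fun measurableSet_Ioo fun u hu => mul_comm _ _

lemma aux_err {α β : ℝ} (hα : 0 < α) (hβ : 0 < β) :
    Tendsto (fun t : ℝ => t ^ α * (xm α β t) ^ (-(1 + α * β))) atTop (nhds 0) := by
  set C : ℝ := 1 + α * β with hC
  have hC0 : (0:ℝ) < C := by positivity
  set q : ℝ := β⁻¹ * -C with hq
  have key : ∀ᶠ t in atTop, ((β / C) ^ q) * t ^ (-β⁻¹)
      = t ^ α * (xm α β t) ^ (-C) := by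
    filter_upwards [eventually_gt_atTop (0:ℝ)] with t ht
    have hA : (0:ℝ) ≤ β * t / C := by positivity
    have e1 : (xm α β t) ^ (-C) = (β * t / C) ^ q := by
      rw [xm, ← Real.rpow_mul hA, hq]
    have e2 : (β * t / C) ^ q = (β / C) ^ q * t ^ q := by
      rw [show β * t / C = (β / C) * t by ring, Real.mul_rpow (by positivity) ht.le]
    have e3 : t ^ α * t ^ q = t ^ (-β⁻¹) := by
      rw [← Real.rpow_add ht]
      congr 1
      rw [hq, hC]
      field_simp
      ring
    rw [e1, e2, ← e3]
    ring
  have h0 : Tendsto (fun t : ℝ => ((β / C) ^ q) * t ^ (-β⁻¹)) atTop (nhds 0) := by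
    have := (tendsto_rpow_neg_atTop (inv_pos.2 hβ)).const_mul ((β / C) ^ q)
    simpa using this
  exact h0.congr' key

lemma sum_int_compare (f : ℝ → ℝ) (M : ℝ) (m : ℕ)
    (hf0 : ∀ x : ℝ, 1 ≤ x → 0 ≤ f x)
    (hfb : ∀ x : ℝ, 1 ≤ x → f x ≤ M)
    (hmono : MonotoneOn f (Icc 1 ((m:ℝ)+1)))
    (hanti : AntitoneOn f (Ici ((m:ℝ)+2)))
    (hInt : IntegrableOn f (Ioi 1))
    (hsum : Summable (fun k : ℕ => f ((k:ℝ)+1))) :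
    |(∑' k : ℕ, f ((k:ℝ)+1)) - ∫ x in Ioi 1, f x| ≤ 2 * M := by
  set un : ℝ := (m:ℝ)+1 with hun
  set uN : ℝ := (m:ℝ)+2 with huN
  have hm0 : (0:ℝ) ≤ m := Nat.cast_nonneg m
  have hun1 : (1:ℝ) ≤ un := by rw [hun]; linarith
  have huN1 : (1:ℝ) ≤ uN := by rw [huN]; linarith
  have hM0 : 0 ≤ M := le_trans (hf0 1 le_rfl) (hfb 1 le_rfl)
  have hIntN : IntegrableOn f (Ioi uN) := hInt.mono_set (Ioi_subset_Ioi (by linarith))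
  have hnonnegN : 0 ≤ᵐ[volume.restrict (Ioi uN)] f :=
    (ae_restrict_iff' measurableSet_Ioi).2
      (ae_of_all _ fun x hx => hf0 x (le_trans huN1 (le_of_lt hx)))
  set H : ℝ := ∑ i ∈ Finset.range (m+1), f ((i:ℝ)+1) with hH
  set T : ℝ := ∑' k : ℕ, f (((k+(m+1):ℕ):ℝ)+1) with hT
  have split1 : H + T = ∑' k : ℕ, f ((k:ℝ)+1) := hsum.sum_add_tsum_nat_add (m+1)
  have hmono' : MonotoneOn f (Icc 1 (1+(m:ℕ):ℝ)) := by
    convert hmono using 2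
    push_cast [hun]; ring
  -- connect interval integral with Ioc
  have e5 : (∫ x in (1:ℝ)..(1+(m:ℕ):ℝ), f x) = ∫ x in Ioc 1 un, f x := by
    rw [show (1+(m:ℕ):ℝ) = un by rw [hun]; push_cast; ring,
      intervalIntegral.integral_of_le hun1]
  -- (1) upper bound for H
  have h1 : H ≤ (∫ x in Ioc 1 un, f x) + M := by
    have hs1 := hmono'.sum_le_integral
    rw [e5] at hs1
    have e : ∑ i ∈ Finset.range m, f ((i:ℝ)+1) = ∑ i ∈ Finset.range m, f (1+(i:ℕ):ℝ) :=
      Finset.sum_congr rfl fun i _ => congrArg f (by push_cast; ring)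
    rw [hH, Finset.sum_range_succ, e]
    have := hfb ((m:ℝ)+1) (by linarith)
    push_cast at *
    linarith
  -- (2) lower bound for H
  have h2 : (∫ x in Ioc 1 un, f x) ≤ H := by
    have hs2 := hmono'.integral_le_sum
    rw [e5] at hs2
    have e : ∑ i ∈ Finset.range m, f ((1:ℝ)+((i+1:ℕ):ℝ)) =
        ∑ i ∈ Finset.range m, f (((i+1:ℕ):ℝ)+1) :=
      Finset.sum_congr rfl fun i _ => congrArg f (by push_cast; ring)
    rw [hH, Finset.sum_range_succ']
    have h0 : 0 ≤ f (((0:ℕ):ℝ)+1) := hf0 _ (by norm_num)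
    push_cast at *
    linarith
  -- tail: shifted sequence
  set g : ℕ → ℝ := fun k => f (((k+(m+1):ℕ):ℝ)+1) with hg
  have hgsum : Summable g := by
    have := (summable_nat_add_iff (f := fun k : ℕ => f ((k:ℝ)+1)) (m+1)).2 hsum
    exact this.congr fun k => rfl
  have hg0 : ∀ k, 0 ≤ g k := fun k => hf0 _ (by push_cast; linarith)
  have hanti' : ∀ j : ℕ, AntitoneOn f (Icc uN (uN + (j:ℕ))) :=
    fun j => hanti.mono Icc_subset_Ici_self
  have hIocIoi : ∀ j : ℕ, (∫ x in uN..(uN+(j:ℕ)), f x) ≤ ∫ x in Ioi uN, f x := by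
    intro j
    rw [intervalIntegral.integral_of_le (le_add_of_nonneg_right (Nat.cast_nonneg j))]
    exact setIntegral_mono_set hIntN hnonnegN (HasSubset.Subset.eventuallyLE Ioc_subset_Ioi_self)
  -- (3) upper bound for T
  have h3 : T ≤ M + ∫ x in Ioi uN, f x := by
    rw [hT, hgsum.tsum_eq_zero_add]
    have e0 : g 0 = f uN := congrArg f (by rw [huN]; push_cast; ring)
    have hb : g 0 ≤ M := by rw [e0]; exact hfb uN huN1
    have htail : (∑' k, g (k+1)) ≤ ∫ x in Ioi uN, f x := by
      apply Real.tsum_le_of_sum_range_le (fun k => hg0 _)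
      intro j
      have hs3 := (hanti' j).sum_le_integral
      have e : ∑ i ∈ Finset.range j, g (i+1) =
          ∑ i ∈ Finset.range j, f (uN + ((i+1:ℕ):ℝ)) :=
        Finset.sum_congr rfl fun i _ => congrArg f (by rw [huN]; push_cast; ring)
      rw [e]
      exact le_trans hs3 (hIocIoi j)
    exact add_le_add hb htail
  -- (4) lower bound for T
  have h4 : (∫ x in Ioi uN, f x) ≤ T := by
    have key : ∀ j : ℕ, (∫ x in uN..(uN+(j:ℕ)), f x) ≤ T := by
      intro j
      have hs4 := (hanti' j).integral_le_sum
      have e : ∑ i ∈ Finset.range j, f (uN + (i:ℕ)) = ∑ i ∈ Finset.range j, g i :=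
        Finset.sum_congr rfl fun i _ => congrArg f (by rw [huN]; push_cast; ring)
      calc (∫ x in uN..(uN+(j:ℕ)), f x) ≤ ∑ i ∈ Finset.range j, f (uN + (i:ℕ)) := hs4
        _ = ∑ i ∈ Finset.range j, g i := e
        _ ≤ T := hgsum.sum_le_tsum _ (fun i _ => hg0 i)
    have htd : Tendsto (fun j : ℕ => ∫ x in uN..(uN+(j:ℕ)), f x) atTop
        (nhds (∫ x in Ioi uN, f x)) :=
      intervalIntegral_tendsto_integral_Ioi uN hIntN
        (tendsto_atTop_add_const_left _ uN tendsto_natCast_atTop_atTop)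
    exact le_of_tendsto htd (Eventually.of_forall key)
  -- (5) integral splitting
  have hIoc1 : IntegrableOn f (Ioc 1 un) := hInt.mono_set Ioc_subset_Ioi_self
  have hIoiun : IntegrableOn f (Ioi un) := hInt.mono_set (Ioi_subset_Ioi hun1)
  have hIoc2 : IntegrableOn f (Ioc un uN) := hIoiun.mono_set Ioc_subset_Ioi_self
  have sp1 : (∫ x in Ioi 1, f x) = (∫ x in Ioc 1 un, f x) + ∫ x in Ioi un, f x := by
    rw [← Ioc_union_Ioi_eq_Ioi hun1,
      setIntegral_union (Ioc_disjoint_Ioi le_rfl) measurableSet_Ioi hIoc1 hIoiun]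
  have sp2 : (∫ x in Ioi un, f x) = (∫ x in Ioc un uN, f x) + ∫ x in Ioi uN, f x := by
    rw [← Ioc_union_Ioi_eq_Ioi (by rw [hun, huN]; linarith : un ≤ uN),
      setIntegral_union (Ioc_disjoint_Ioi le_rfl) measurableSet_Ioi hIoc2 hIntN]
  -- (6) gap bounds
  have hgap0 : 0 ≤ ∫ x in Ioc un uN, f x :=
    setIntegral_nonneg measurableSet_Ioc fun x hx => hf0 x (le_trans hun1 hx.1.le)
  have hgapM : (∫ x in Ioc un uN, f x) ≤ M := by
    have hle : (∫ x in Ioc un uN, f x) ≤ ∫ _x in Ioc un uN, M :=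
      setIntegral_mono_on hIoc2 (integrableOn_const measure_Ioc_lt_top.ne)
        measurableSet_Ioc (fun x hx => hfb x (le_trans hun1 hx.1.le))
    have : (∫ _x in Ioc un uN, M) = M := by
      rw [setIntegral_const, Real.volume_real_Ioc, show uN - un = 1 by rw [hun, huN]; ring]
      simp
    linarith
  -- conclude
  rw [← split1, abs_le]
  constructor <;> [skip; skip] <;> linarith

lemma aux_compare {α β t : ℝ} (hα : 0 < α) (hβ : 0 < β) (ht : 0 < t) (hxm : 2 ≤ xm α β t) :
    |(∑' k : ℕ, ((k : ℝ) + 1) ^ (-(1 + α * β)) * Real.exp (-((k : ℝ) + 1) ^ (-β) * t))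
      - ∫ x in Ioi 1, x ^ (-(1 + α * β)) * Real.exp (-x ^ (-β) * t)|
      ≤ 2 * (xm α β t) ^ (-(1 + α * β)) := by
  set N : ℕ := ⌈xm α β t⌉₊ with hNdef
  have hN1 : 1 < N := Nat.lt_ceil.2 (by norm_num; linarith)
  set m : ℕ := N - 2 with hm
  have hm1 : (m:ℝ) + 1 < xm α β t := by
    have : m + 1 < N := by omega
    exact_mod_cast Nat.lt_ceil.1 (by exact_mod_cast this)
  have hm2 : xm α β t ≤ (m:ℝ) + 2 := by
    have h := Nat.le_ceil (xm α β t)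
    have e : ((N:ℕ):ℝ) = (m:ℝ) + 2 := by
      have : N = m + 2 := by omega
      rw [this]; push_cast; ring
    rw [e] at h; exact h
  exact sum_int_compare _ _ m
    (fun x hx => mul_nonneg (Real.rpow_nonneg (by linarith) _) (Real.exp_pos _).le)
    (fun x hx => aux_bound hα hβ ht (by linarith) hx)
    (aux_mono hα hβ ht one_pos hm1.le)
    (fun x hx y hy hxy => aux_anti hα hβ ht (by positivity) hm2 (b := y)
      ⟨hx, hxy⟩ ⟨hy, le_rfl⟩ hxy)
    (aux_integrable hα hβ ht.le le_rfl)
    (aux_summable hα hβ ht.le)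

/-- Power-law tail of the memory kernel: with `c_k = k^{-(1+αβ)}`, `λ_k = k^{-β}`
(modes indexed by `k+1` for `k : ℕ`) and `K(t) = ∑ c_k e^{-λ_k t}`, one has
`t^α K(t) → Γ(α)/β` as `t → ∞`, i.e. `K(t) ∼ t^{-α}`. -/
theorem stmt_8 (α β : ℝ) (hα : 0 < α) (hβ : 0 < β) :
    Filter.Tendsto
      (fun t : ℝ => t ^ α * ∑' k : ℕ,
        ((k : ℝ) + 1) ^ (-(1 + α * β)) * Real.exp (-((k : ℝ) + 1) ^ (-β) * t))
      Filter.atTop (nhds (Real.Gamma α / β)) := by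
  have hC : (0:ℝ) < 1 + α * β := by positivity
  have hxm_tendsto : Tendsto (fun t => xm α β t) atTop atTop := by
    have h1 : Tendsto (fun t : ℝ => β * t / (1 + α * β)) atTop atTop := by
      have := Tendsto.atTop_mul_const (show (0:ℝ) < β / (1 + α * β) by positivity)
        (tendsto_id (α := ℝ) (x := atTop))
      exact this.congr fun t => by field_simp; rfl
    have := (tendsto_rpow_atTop (inv_pos.2 hβ)).comp h1
    exact this.congr fun t => rfl
  have hev2 : ∀ᶠ t in atTop, 2 ≤ xm α β t := hxm_tendsto.eventually_ge_atTop 2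
  have h_main : Tendsto (fun t : ℝ =>
      t ^ α * ∫ x in Ioi 1, x ^ (-(1 + α * β)) * Real.exp (-x ^ (-β) * t)) atTop
      (nhds (Real.Gamma α / β)) := by
    have h := (aux_gamma hα).div_const β
    refine h.congr' ?_
    filter_upwards [eventually_gt_atTop (0:ℝ)] with t ht
    rw [aux_subst hα hβ ht]
    field_simp
    ring
    congr 1
    ext x
    ring_nf
  have herr2 : Tendsto (fun t : ℝ => 2 * (t ^ α * (xm α β t) ^ (-(1 + α * β)))) atTop
      (nhds 0) := by
    simpa using (aux_err hα hβ).const_mul 2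
  have hlow : Tendsto (fun t : ℝ =>
      (t ^ α * ∫ x in Ioi 1, x ^ (-(1 + α * β)) * Real.exp (-x ^ (-β) * t))
        - 2 * (t ^ α * (xm α β t) ^ (-(1 + α * β)))) atTop (nhds (Real.Gamma α / β)) := by
    simpa using h_main.sub herr2
  have hhigh : Tendsto (fun t : ℝ =>
      (t ^ α * ∫ x in Ioi 1, x ^ (-(1 + α * β)) * Real.exp (-x ^ (-β) * t))
        + 2 * (t ^ α * (xm α β t) ^ (-(1 + α * β)))) atTop (nhds (Real.Gamma α / β)) := by
    simpa using h_main.add herr2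
  refine tendsto_of_tendsto_of_tendsto_of_le_of_le' hlow hhigh ?_ ?_
  · filter_upwards [eventually_gt_atTop (0:ℝ), hev2] with t ht h2
    have hc := aux_compare hα hβ ht h2
    have hp : (0:ℝ) ≤ t ^ α := Real.rpow_nonneg ht.le _
    have l1 := mul_le_mul_of_nonneg_left (abs_le.1 hc).1 hp
    nlinarith [l1]
  · filter_upwards [eventually_gt_atTop (0:ℝ), hev2] with t ht h2
    have hc := aux_compare hα hβ ht h2
    have hp : (0:ℝ) ≤ t ^ α := Real.rpow_nonneg ht.le _
    have l2 := mul_le_mul_of_nonneg_left (abs_le.1 hc).2 hp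
    nlinarith [l2]
end

section
/- Let Φ : ℝ → [0,∞) be twice continuously differentiable, and suppose there exist c, q₁, q₂ > 0 such that for all x, y ∈ ℝ and t ∈ [0,1]: |Φ''(x)| ≤ c(Φ(x)^{q₁} + 1) and Φ((1−t)x + ty) ≤ c(Φ(x)^{q₂} + Φ(|x−y|)^{q₂} + 1). Then there exist a number q > 0 and a function f : ℝ → [0,∞) that is bounded on bounded sets such that for all x, y ∈ ℝ: |Φ'(x) − Φ'(y)| ≤ |x − y| ( f(x−y) + Φ(x)^{q} ). -/
open MeasureTheory Real Filter

private lemma two_rpow_aux (a b p : ℝ) (ha : 0 ≤ a) (hb : 0 ≤ b) (hp : 0 ≤ p) :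
    (a + b) ^ p ≤ 2 ^ p * (a ^ p + b ^ p) := by
  rcases le_total a b with h | h
  · calc (a + b) ^ p ≤ (2 * b) ^ p := by
          apply Real.rpow_le_rpow (by linarith) (by linarith) hp
    _ = 2 ^ p * b ^ p := Real.mul_rpow (by norm_num) hb
    _ ≤ 2 ^ p * (a ^ p + b ^ p) := by
          have : (0:ℝ) ≤ a ^ p := Real.rpow_nonneg ha p
          have h2 : (0:ℝ) ≤ (2:ℝ) ^ p := Real.rpow_nonneg (by norm_num) p
          nlinarith
  · calc (a + b) ^ p ≤ (2 * a) ^ p := by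
          apply Real.rpow_le_rpow (by linarith) (by linarith) hp
    _ = 2 ^ p * a ^ p := Real.mul_rpow (by norm_num) ha
    _ ≤ 2 ^ p * (a ^ p + b ^ p) := by
          have : (0:ℝ) ≤ b ^ p := Real.rpow_nonneg hb p
          have h2 : (0:ℝ) ≤ (2:ℝ) ^ p := Real.rpow_nonneg (by norm_num) p
          nlinarith

set_option maxHeartbeats 1000000 in
/-- The growth conditions (2.14) on `Φ''` and on `Φ` along segments imply the
local-Lipschitz-type condition on `Φ'` (Assumption 2.7):
`|Φ'(x) - Φ'(y)| ≤ |x-y| (f(x-y) + Φ(x)^q)` for some `q > 0` and some `f ≥ 0`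
bounded on bounded sets. -/
theorem stmt_13 (Φ : ℝ → ℝ) (hΦnonneg : ∀ x : ℝ, 0 ≤ Φ x) (hΦ : ContDiff ℝ 2 Φ)
    (c q₁ q₂ : ℝ) (hc : 0 < c) (hq₁ : 0 < q₁) (hq₂ : 0 < q₂)
    (h1 : ∀ x : ℝ, |deriv (deriv Φ) x| ≤ c * ((Φ x) ^ q₁ + 1))
    (h2 : ∀ x y : ℝ, ∀ t ∈ Set.Icc (0 : ℝ) 1,
      Φ ((1 - t) * x + t * y) ≤ c * ((Φ x) ^ q₂ + (Φ |x - y|) ^ q₂ + 1)) :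
    ∃ q : ℝ, 0 < q ∧ ∃ f : ℝ → ℝ, (∀ u : ℝ, 0 ≤ f u) ∧
      (∀ r : ℝ, ∃ M : ℝ, ∀ u : ℝ, |u| ≤ r → f u ≤ M) ∧
      ∀ x y : ℝ, |deriv Φ x - deriv Φ y| ≤ |x - y| * (f (x - y) + (Φ x) ^ q) := by
  set p : ℝ := q₁ * q₂ with hp
  have hppos : 0 < p := mul_pos hq₁ hq₂
  set K : ℝ := c * (c ^ q₁ * (2 ^ q₁ * 2 ^ q₁)) with hK
  have hKpos : 0 < K := by
    have := Real.rpow_pos_of_pos hc q₁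
    have h2p := Real.rpow_pos_of_pos (by norm_num : (0:ℝ) < 2) q₁
    positivity
  refine ⟨2 * p, by positivity, fun u => K * (Φ |u|) ^ p + (K + c + K ^ 2), ?_, ?_, ?_⟩
  · intro u
    have := Real.rpow_nonneg (hΦnonneg |u|) p
    dsimp only
    nlinarith
  · -- bounded on bounded sets
    intro r
    have hcont : ContinuousOn Φ (Set.Icc (-r) r) := hΦ.continuous.continuousOn
    rcases (isCompact_Icc (a := -r) (b := r)).exists_bound_of_continuousOn hcont with ⟨C, hC⟩
    refine ⟨K * (max C 0) ^ p + (K + c + K ^ 2), fun u hu => ?_⟩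
    have hmem : |u| ∈ Set.Icc (-r) r :=
      ⟨by have h0 := abs_nonneg u; linarith, hu⟩
    have hΦu : Φ |u| ≤ max C 0 := by
      have := hC |u| hmem
      calc Φ |u| ≤ abs (Φ |u|) := le_abs_self _
        _ ≤ C := by simpa using this
        _ ≤ max C 0 := le_max_left _ _
    have : (Φ |u|) ^ p ≤ (max C 0) ^ p :=
      Real.rpow_le_rpow (hΦnonneg _) hΦu hppos.le
    dsimp only
    nlinarith
  · intro x y
    dsimp only
    -- differentiability of deriv Φ
    have hΦ1 : ContDiff ℝ 1 (deriv Φ) :=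
      ((contDiff_succ_iff_deriv (n := 1)).mp (by exact_mod_cast hΦ)).2.2
    have hdiff : Differentiable ℝ (deriv Φ) := hΦ1.differentiable one_ne_zero
    set C₀ : ℝ := (K * (Φ |x - y|) ^ p + (K + c + K ^ 2)) + (Φ x) ^ (2 * p) with hC₀
    -- bound the second derivative on the segment from x to y
    have key : ∀ z ∈ segment ℝ x y, |deriv (deriv Φ) z| ≤ C₀ := by
      intro z hz
      rw [segment_eq_image] at hz
      obtain ⟨t, ht, rfl⟩ := hz
      simp only [smul_eq_mul]
      have hseg := h2 x y t ht
      have hΦz : Φ ((1 - t) * x + t * y) ^ q₁ ≤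
          (c * ((Φ x) ^ q₂ + (Φ |x - y|) ^ q₂ + 1)) ^ q₁ :=
        Real.rpow_le_rpow (hΦnonneg _) hseg hq₁.le
      set a : ℝ := (Φ x) ^ q₂ with ha
      set b : ℝ := (Φ |x - y|) ^ q₂ with hb
      have ha0 : 0 ≤ a := Real.rpow_nonneg (hΦnonneg _) _
      have hb0 : 0 ≤ b := Real.rpow_nonneg (hΦnonneg _) _
      have hsplit : (a + b + 1) ^ q₁ ≤ 2 ^ q₁ * (2 ^ q₁ * (a ^ q₁ + b ^ q₁) + 1) := by
        calc (a + b + 1) ^ q₁ ≤ 2 ^ q₁ * ((a + b) ^ q₁ + (1:ℝ) ^ q₁) :=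
              two_rpow_aux (a + b) 1 q₁ (by linarith) (by norm_num) hq₁.le
        _ ≤ 2 ^ q₁ * (2 ^ q₁ * (a ^ q₁ + b ^ q₁) + 1) := by
              rw [Real.one_rpow]
              have := two_rpow_aux a b q₁ ha0 hb0 hq₁.le
              have h2p : (0:ℝ) ≤ (2:ℝ) ^ q₁ := Real.rpow_nonneg (by norm_num) q₁
              nlinarith
      have hprod : (c * (a + b + 1)) ^ q₁ = c ^ q₁ * (a + b + 1) ^ q₁ :=
        Real.mul_rpow hc.le (by linarith)
      have haq : a ^ q₁ = (Φ x) ^ p := by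
        rw [ha, ← Real.rpow_mul (hΦnonneg x), mul_comm q₂ q₁]
      have hbq : b ^ q₁ = (Φ |x - y|) ^ p := by
        rw [hb, ← Real.rpow_mul (hΦnonneg _), mul_comm q₂ q₁]
      -- K * Φx^p ≤ Φx^(2p) + K^2
      have hamgm : K * (Φ x) ^ p ≤ (Φ x) ^ (2 * p) + K ^ 2 := by
        have h2 : (Φ x) ^ (2 * p) = ((Φ x) ^ p) ^ 2 := by
          rw [mul_comm, Real.rpow_mul (hΦnonneg x), Real.rpow_two]
        have h3 : 0 ≤ (Φ x) ^ p := Real.rpow_nonneg (hΦnonneg x) p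
        nlinarith
      have hcq : (0:ℝ) < c ^ q₁ := Real.rpow_pos_of_pos hc q₁
      have h2q : (0:ℝ) < (2:ℝ) ^ q₁ := Real.rpow_pos_of_pos (by norm_num) q₁
      calc |deriv (deriv Φ) ((1 - t) * x + t * y)| ≤
            c * (Φ ((1 - t) * x + t * y) ^ q₁ + 1) := h1 _
        _ ≤ c * ((c * (a + b + 1)) ^ q₁ + 1) := by nlinarith
        _ ≤ c * (c ^ q₁ * (2 ^ q₁ * (2 ^ q₁ * (a ^ q₁ + b ^ q₁) + 1)) + 1) := by
            rw [hprod]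
            nlinarith [mul_le_mul_of_nonneg_left hsplit
              (by positivity : (0:ℝ) ≤ c * c ^ q₁)]
        _ = K * (a ^ q₁ + b ^ q₁) + (c * c ^ q₁ * 2 ^ q₁ + c) := by rw [hK]; ring
        _ ≤ K * (a ^ q₁ + b ^ q₁) + (K + c) := by
            have h2one : (1:ℝ) ≤ 2 ^ q₁ := Real.one_le_rpow (by norm_num) hq₁.le
            have : c * c ^ q₁ * 2 ^ q₁ ≤ K := by
              rw [hK]; nlinarith [mul_pos hc hcq]
            linarith
        _ ≤ C₀ := by
            rw [haq, hbq, hC₀]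
            nlinarith
    have hmvt : ‖deriv Φ x - deriv Φ y‖ ≤ C₀ * ‖x - y‖ :=
      (convex_segment y x).norm_image_sub_le_of_norm_hasDerivWithin_le
        (fun z hz => ((hdiff z).hasDerivAt).hasDerivWithinAt)
        (fun z hz => by
          have : z ∈ segment ℝ x y := by rwa [segment_symm] at hz
          simpa using key z this)
        (left_mem_segment ℝ y x) (right_mem_segment ℝ y x)
    calc |deriv Φ x - deriv Φ y| ≤ C₀ * |x - y| := hmvt
      _ = |x - y| * ((K * (Φ |x - y|) ^ p + (K + c + K ^ 2)) + (Φ x) ^ (2 * p)) := by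
          rw [hC₀]; ring
end

section
/- Let m > 0 and let Φ : ℝ → ℝ be continuously differentiable with ∫_ℝ e^{-Φ(x)} dx < ∞, ∫_ℝ |Φ'(x)| e^{-Φ(x)} dx < ∞, and such that there exists b > 0 with b(Φ(x)+1) ≥ x² for all x. Let θ : ℝ → [0,1] be continuously differentiable with compact support, and let ψ : ℝ² → ℝ be continuously differentiable with ψ and its first partial derivatives bounded. Then ∫_{ℝ²} [ v ∂_x ψ(x,v) − (1/m) Φ'(x) θ(x) ∂_v ψ(x,v) ] e^{-Φ(x)} e^{-m v²/2} dx dv = ∫_{ℝ²} v Φ'(x) (1 − θ(x)) ψ(x,v) e^{-Φ(x)} e^{-m v²/2} dx dv. -/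
open MeasureTheory Real Filter

/-- Integration-by-parts identity in the position–velocity variables underlying the
invariance of the Gibbs measure for the cutoff GLE dynamics:
`∫ (v ∂_x ψ − (1/m) Φ' θ ∂_v ψ) e^{-Φ(x)} e^{-m v²/2} dx dv
  = ∫ v Φ'(x) (1-θ(x)) ψ e^{-Φ(x)} e^{-m v²/2} dx dv`. -/
theorem stmt_15 (m : ℝ) (hm : 0 < m) (Φ : ℝ → ℝ) (hΦ : ContDiff ℝ 1 Φ)
    (hint1 : MeasureTheory.Integrable fun x : ℝ => Real.exp (-Φ x))
    (hint2 : MeasureTheory.Integrable fun x : ℝ => |deriv Φ x| * Real.exp (-Φ x))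
    (hgrow : ∃ b : ℝ, 0 < b ∧ ∀ x : ℝ, x ^ 2 ≤ b * (Φ x + 1))
    (θ : ℝ → ℝ) (hθ : ContDiff ℝ 1 θ) (hθc : HasCompactSupport θ)
    (hθ01 : ∀ x : ℝ, θ x ∈ Set.Icc (0 : ℝ) 1)
    (ψ : ℝ → ℝ → ℝ) (hψ : ContDiff ℝ 1 fun p : ℝ × ℝ => ψ p.1 p.2)
    (hψb : ∃ M : ℝ, ∀ x v : ℝ, |ψ x v| ≤ M)
    (hψb₁ : ∃ M : ℝ, ∀ x v : ℝ, |deriv (fun x' => ψ x' v) x| ≤ M)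
    (hψb₂ : ∃ M : ℝ, ∀ x v : ℝ, |deriv (fun v' => ψ x v') v| ≤ M) :
    ∫ p : ℝ × ℝ,
        (p.2 * deriv (fun x' => ψ x' p.2) p.1
            - (1 / m) * deriv Φ p.1 * θ p.1 * deriv (fun v' => ψ p.1 v') p.2)
          * (Real.exp (-Φ p.1) * Real.exp (-m * p.2 ^ 2 / 2))
      = ∫ p : ℝ × ℝ,
          p.2 * deriv Φ p.1 * (1 - θ p.1) * ψ p.1 p.2
            * (Real.exp (-Φ p.1) * Real.exp (-m * p.2 ^ 2 / 2)) := by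
  obtain ⟨M, hM⟩ := hψb
  obtain ⟨M₁, hM₁⟩ := hψb₁
  obtain ⟨M₂, hM₂⟩ := hψb₂
  set F : ℝ × ℝ → ℝ := fun p => ψ p.1 p.2 with hF
  set ρ : ℝ → ℝ := fun x => Real.exp (-Φ x) with hρ
  set G : ℝ → ℝ := fun v => Real.exp (-m * v ^ 2 / 2) with hGdef
  set ψ₁ : ℝ × ℝ → ℝ := fun p => fderiv ℝ F p (1, 0) with hψ₁def
  set ψ₂ : ℝ × ℝ → ℝ := fun p => fderiv ℝ F p (0, 1) with hψ₂def
  -- basic positivity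
  have hρpos : ∀ x, 0 < ρ x := fun x => Real.exp_pos _
  have hGpos : ∀ v, 0 < G v := fun v => Real.exp_pos _
  -- derivatives of the slice functions
  have hd1 : ∀ x v, HasDerivAt (fun x' => ψ x' v) (ψ₁ (x, v)) x := by
    intro x v
    have hF' : HasFDerivAt F (fderiv ℝ F (x, v)) (x, v) :=
      (hψ.differentiable one_ne_zero (x, v)).hasFDerivAt
    have hin : HasDerivAt (fun x' : ℝ => ((x' : ℝ), v)) ((1 : ℝ), (0 : ℝ)) x :=
      (hasDerivAt_id x).prodMk (hasDerivAt_const x v)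
    exact hF'.comp_hasDerivAt x hin
  have hd2 : ∀ x v, HasDerivAt (fun v' => ψ x v') (ψ₂ (x, v)) v := by
    intro x v
    have hF' : HasFDerivAt F (fderiv ℝ F (x, v)) (x, v) :=
      (hψ.differentiable one_ne_zero (x, v)).hasFDerivAt
    have hin : HasDerivAt (fun v' : ℝ => ((x : ℝ), v')) ((0 : ℝ), (1 : ℝ)) v :=
      (hasDerivAt_const v x).prodMk (hasDerivAt_id v)
    exact hF'.comp_hasDerivAt v hin
  have hψ₁b : ∀ x v, |ψ₁ (x, v)| ≤ M₁ := by
    intro x v; rw [← (hd1 x v).deriv]; exact hM₁ x v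
  have hψ₂b : ∀ x v, |ψ₂ (x, v)| ≤ M₂ := by
    intro x v; rw [← (hd2 x v).deriv]; exact hM₂ x v
  -- continuity facts
  have hψc : Continuous F := hψ.continuous
  have hψ₁c : Continuous ψ₁ := (hψ.continuous_fderiv one_ne_zero).clm_apply continuous_const
  have hψ₂c : Continuous ψ₂ := (hψ.continuous_fderiv one_ne_zero).clm_apply continuous_const
  have hρc : Continuous ρ := Real.continuous_exp.comp hΦ.continuous.neg
  have hGc : Continuous G := Real.continuous_exp.comp (by fun_prop)
  have hΦ'c : Continuous (deriv Φ) := hΦ.continuous_deriv le_rfl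
  have hθcont : Continuous θ := hθ.continuous
  -- derivatives of the weights
  have hρd : ∀ x, HasDerivAt ρ (ρ x * -deriv Φ x) x := by
    intro x
    exact ((hΦ.differentiable one_ne_zero x).hasDerivAt).neg.exp
  have hGd : ∀ v, HasDerivAt G (G v * -(m * v)) v := by
    intro v
    have h1 : HasDerivAt (fun v : ℝ => -m * v ^ 2 / 2) (-(m * v)) v := by
      have := ((hasDerivAt_pow 2 v).const_mul (-m)).div_const 2
      refine this.congr_deriv ?_
      simp; ring
    exact h1.exp
  -- 1D integrabilities
  have hΦ'ρ_int : Integrable (fun x => deriv Φ x * ρ x) := by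
    refine hint2.mono' ((hΦ'c.mul hρc).aestronglyMeasurable) ?_
    filter_upwards with x
    rw [Real.norm_eq_abs, abs_mul, abs_of_pos (hρpos x)]
  have hG_int : Integrable G := by
    have := integrable_exp_neg_mul_sq (show (0:ℝ) < m / 2 by positivity)
    convert this using 2 with v
    simp only [hGdef]
    congr 1
    ring
  have hvG_int : Integrable (fun v => |v| * G v) := by
    have := (integrable_mul_exp_neg_mul_sq (show (0:ℝ) < m / 2 by positivity)).abs
    convert this using 2 with v
    rw [abs_mul, Real.abs_exp]
    simp only [hGdef]
    congr 2
    ring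
  -- the key one-dimensional identity in x (for each fixed v)
  have keyX : ∀ v, ∫ x, ψ₁ (x, v) * ρ x = ∫ x, deriv Φ x * ψ x v * ρ x := by
    intro v
    have hfd : ∀ x, HasDerivAt (fun x => ψ x v * ρ x)
        (ψ₁ (x, v) * ρ x + ψ x v * (ρ x * -deriv Φ x)) x :=
      fun x => (hd1 x v).mul (hρd x)
    have hint_a : Integrable (fun x => ψ₁ (x, v) * ρ x) := by
      refine (hint1.const_mul M₁).mono'
        ((hψ₁c.comp (continuous_id.prodMk continuous_const)).mul hρc).aestronglyMeasurable ?_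
      filter_upwards with x
      rw [Real.norm_eq_abs, abs_mul, abs_of_pos (hρpos x)]
      exact mul_le_mul_of_nonneg_right (hψ₁b x v) (hρpos x).le
    have hint_b : Integrable (fun x => ψ x v * (ρ x * -deriv Φ x)) := by
      refine (hint2.const_mul M).mono'
        (((hψc.comp (continuous_id.prodMk continuous_const)).mul
          (hρc.mul hΦ'c.neg))).aestronglyMeasurable ?_
      filter_upwards with x
      rw [Real.norm_eq_abs, abs_mul, abs_mul, abs_neg, abs_of_pos (hρpos x)]
      calc |ψ x v| * (ρ x * |deriv Φ x|) ≤ M * (ρ x * |deriv Φ x|) := by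
            exact mul_le_mul_of_nonneg_right (hM x v)
              (mul_nonneg (hρpos x).le (abs_nonneg _))
        _ = M * (|deriv Φ x| * ρ x) := by ring
    have hint_f : Integrable (fun x => ψ x v * ρ x) := by
      refine (hint1.const_mul M).mono'
        ((hψc.comp (continuous_id.prodMk continuous_const)).mul hρc).aestronglyMeasurable ?_
      filter_upwards with x
      rw [Real.norm_eq_abs, abs_mul, abs_of_pos (hρpos x)]
      exact mul_le_mul_of_nonneg_right (hM x v) (hρpos x).le
    have h0 : ∫ x, (ψ₁ (x, v) * ρ x + ψ x v * (ρ x * -deriv Φ x)) = 0 :=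
      integral_eq_zero_of_hasDerivAt_of_integrable hfd (hint_a.add hint_b) hint_f
    rw [integral_add hint_a hint_b] at h0
    have hcongr : ∫ x, ψ x v * (ρ x * -deriv Φ x) = -∫ x, deriv Φ x * ψ x v * ρ x := by
      rw [← integral_neg]
      congr 1 with x
      ring
    rw [hcongr] at h0
    linarith
  -- the key one-dimensional identity in v (for each fixed x)
  have keyV : ∀ x, ∫ v, ψ₂ (x, v) * G v = ∫ v, m * v * ψ x v * G v := by
    intro x
    have hfd : ∀ v, HasDerivAt (fun v => ψ x v * G v)
        (ψ₂ (x, v) * G v + ψ x v * (G v * -(m * v))) v :=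
      fun v => (hd2 x v).mul (hGd v)
    have hint_a : Integrable (fun v => ψ₂ (x, v) * G v) := by
      refine (hG_int.const_mul M₂).mono'
        ((hψ₂c.comp (continuous_const.prodMk continuous_id)).mul hGc).aestronglyMeasurable ?_
      filter_upwards with v
      rw [Real.norm_eq_abs, abs_mul, abs_of_pos (hGpos v)]
      exact mul_le_mul_of_nonneg_right (hψ₂b x v) (hGpos v).le
    have hint_b : Integrable (fun v => ψ x v * (G v * -(m * v))) := by
      refine ((hvG_int.const_mul (M * m)).mono'
        (((hψc.comp (continuous_const.prodMk continuous_id)).mul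
          (hGc.mul (by fun_prop)))).aestronglyMeasurable ?_)
      filter_upwards with v
      rw [Real.norm_eq_abs, abs_mul, abs_mul, abs_neg, abs_mul, abs_of_pos (hGpos v),
        abs_of_pos hm]
      calc |ψ x v| * (G v * (m * |v|)) ≤ M * (G v * (m * |v|)) := by
            refine mul_le_mul_of_nonneg_right (hM x v) ?_
            positivity
        _ = M * m * (|v| * G v) := by ring
    have hint_f : Integrable (fun v => ψ x v * G v) := by
      refine (hG_int.const_mul M).mono'
        ((hψc.comp (continuous_const.prodMk continuous_id)).mul hGc).aestronglyMeasurable ?_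
      filter_upwards with v
      rw [Real.norm_eq_abs, abs_mul, abs_of_pos (hGpos v)]
      exact mul_le_mul_of_nonneg_right (hM x v) (hGpos v).le
    have h0 : ∫ v, (ψ₂ (x, v) * G v + ψ x v * (G v * -(m * v))) = 0 :=
      integral_eq_zero_of_hasDerivAt_of_integrable hfd (hint_a.add hint_b) hint_f
    rw [integral_add hint_a hint_b] at h0
    have hcongr : ∫ v, ψ x v * (G v * -(m * v)) = -∫ v, m * v * ψ x v * G v := by
      rw [← integral_neg]
      congr 1 with v
      ring
    rw [hcongr] at h0
    linarith
  -- 2D integrands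
  set I₁ : ℝ × ℝ → ℝ := fun p => p.2 * ψ₁ p * (ρ p.1 * G p.2) with hI₁def
  set I₂ : ℝ × ℝ → ℝ := fun p => 1 / m * deriv Φ p.1 * θ p.1 * ψ₂ p * (ρ p.1 * G p.2)
    with hI₂def
  set J₁ : ℝ × ℝ → ℝ := fun p => p.2 * deriv Φ p.1 * ψ p.1 p.2 * (ρ p.1 * G p.2) with hJ₁def
  set J₂ : ℝ × ℝ → ℝ := fun p => deriv Φ p.1 * θ p.1 * p.2 * ψ p.1 p.2 * (ρ p.1 * G p.2)
    with hJ₂def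
  have hθb : ∀ x, |θ x| ≤ 1 := by
    intro x
    rcases hθ01 x with ⟨h1, h2⟩
    rw [abs_of_nonneg h1]; exact h2
  -- 2D integrabilities (w.r.t. the product measure)
  have hvol : (volume : Measure (ℝ × ℝ)) = (volume : Measure ℝ).prod volume :=
    MeasureTheory.Measure.volume_eq_prod ℝ ℝ
  have hI₁int : Integrable I₁ ((volume : Measure ℝ).prod volume) := by
    refine ((hint1.mul_prod (hvG_int.const_mul M₁))).mono'
      ((continuous_snd.mul hψ₁c).mul
        ((hρc.comp continuous_fst).mul (hGc.comp continuous_snd))).aestronglyMeasurable ?_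
    filter_upwards with p
    rw [Real.norm_eq_abs, abs_mul, abs_mul, abs_of_pos (mul_pos (hρpos p.1) (hGpos p.2))]
    calc |p.2| * |ψ₁ p| * (ρ p.1 * G p.2) ≤ |p.2| * M₁ * (ρ p.1 * G p.2) := by
          refine mul_le_mul_of_nonneg_right
            (mul_le_mul_of_nonneg_left (hψ₁b p.1 p.2) (abs_nonneg _)) ?_
          positivity
      _ = ρ p.1 * (M₁ * (|p.2| * G p.2)) := by ring
  have hJ₁int : Integrable J₁ ((volume : Measure ℝ).prod volume) := by
    refine ((hΦ'ρ_int.abs.mul_prod (hvG_int.const_mul M))).mono'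
      (((continuous_snd.mul (hΦ'c.comp continuous_fst)).mul hψc).mul
        ((hρc.comp continuous_fst).mul (hGc.comp continuous_snd))).aestronglyMeasurable ?_
    filter_upwards with p
    rw [Real.norm_eq_abs, abs_mul, abs_mul, abs_mul,
      abs_of_pos (mul_pos (hρpos p.1) (hGpos p.2))]
    calc |p.2| * |deriv Φ p.1| * |ψ p.1 p.2| * (ρ p.1 * G p.2)
        ≤ |p.2| * |deriv Φ p.1| * M * (ρ p.1 * G p.2) := by
          refine mul_le_mul_of_nonneg_right
            (mul_le_mul_of_nonneg_left (hM p.1 p.2) (by positivity)) ?_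
          positivity
      _ = |deriv Φ p.1 * ρ p.1| * (M * (|p.2| * G p.2)) := by
          rw [abs_mul, abs_of_pos (hρpos p.1)]
          ring
  have hI₂int : Integrable I₂ ((volume : Measure ℝ).prod volume) := by
    refine ((hΦ'ρ_int.abs.mul_prod (hG_int.const_mul (1 / m * M₂)))).mono'
      ((((continuous_const.mul (hΦ'c.comp continuous_fst)).mul
        (hθcont.comp continuous_fst)).mul hψ₂c).mul
        ((hρc.comp continuous_fst).mul (hGc.comp continuous_snd))).aestronglyMeasurable ?_
    filter_upwards with p
    rw [Real.norm_eq_abs, abs_mul, abs_mul, abs_mul, abs_mul,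
      abs_of_pos (mul_pos (hρpos p.1) (hGpos p.2)), abs_of_pos (by positivity : (0:ℝ) < 1 / m)]
    calc 1 / m * |deriv Φ p.1| * |θ p.1| * |ψ₂ p| * (ρ p.1 * G p.2)
        ≤ 1 / m * |deriv Φ p.1| * 1 * M₂ * (ρ p.1 * G p.2) := by
          have h1 : 1 / m * |deriv Φ p.1| * |θ p.1| ≤ 1 / m * |deriv Φ p.1| * 1 :=
            mul_le_mul_of_nonneg_left (hθb p.1) (by positivity)
          have h2 : 1 / m * |deriv Φ p.1| * |θ p.1| * |ψ₂ p|
              ≤ 1 / m * |deriv Φ p.1| * 1 * M₂ :=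
            mul_le_mul h1 (hψ₂b p.1 p.2) (abs_nonneg _) (by positivity)
          exact mul_le_mul_of_nonneg_right h2 (by positivity)
      _ = |deriv Φ p.1 * ρ p.1| * (1 / m * M₂ * G p.2) := by
          rw [abs_mul, abs_of_pos (hρpos p.1)]
          ring
  have hJ₂int : Integrable J₂ ((volume : Measure ℝ).prod volume) := by
    refine ((hΦ'ρ_int.abs.mul_prod (hvG_int.const_mul M))).mono'
      ((((((hΦ'c.comp continuous_fst).mul (hθcont.comp continuous_fst)).mul
        continuous_snd).mul hψc).mul
        ((hρc.comp continuous_fst).mul (hGc.comp continuous_snd))).aestronglyMeasurable) ?_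
    filter_upwards with p
    rw [Real.norm_eq_abs, abs_mul, abs_mul, abs_mul, abs_mul,
      abs_of_pos (mul_pos (hρpos p.1) (hGpos p.2))]
    calc |deriv Φ p.1| * |θ p.1| * |p.2| * |ψ p.1 p.2| * (ρ p.1 * G p.2)
        ≤ |deriv Φ p.1| * 1 * |p.2| * M * (ρ p.1 * G p.2) := by
          have h1 : |deriv Φ p.1| * |θ p.1| ≤ |deriv Φ p.1| * 1 :=
            mul_le_mul_of_nonneg_left (hθb p.1) (abs_nonneg _)
          have h2 : |deriv Φ p.1| * |θ p.1| * |p.2| * |ψ p.1 p.2|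
              ≤ |deriv Φ p.1| * 1 * |p.2| * M :=
            mul_le_mul (mul_le_mul_of_nonneg_right h1 (abs_nonneg _)) (hM p.1 p.2)
              (abs_nonneg _) (by positivity)
          exact mul_le_mul_of_nonneg_right h2 (by positivity)
      _ = |deriv Φ p.1 * ρ p.1| * (M * (|p.2| * G p.2)) := by
          rw [abs_mul, abs_of_pos (hρpos p.1)]
          ring
  -- ∫ I₁ = ∫ J₁ via Fubini in the v-outer order
  have hEq1 : ∫ p, I₁ p ∂((volume : Measure ℝ).prod volume)
      = ∫ p, J₁ p ∂((volume : Measure ℝ).prod volume) := by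
    rw [integral_prod_symm _ hI₁int, integral_prod_symm _ hJ₁int]
    congr 1 with v
    have l1 : ∫ x, I₁ (x, v) = (v * G v) * ∫ x, ψ₁ (x, v) * ρ x := by
      rw [← integral_const_mul]
      congr 1 with x
      simp only [hI₁def]
      ring
    have l2 : ∫ x, J₁ (x, v) = (v * G v) * ∫ x, deriv Φ x * ψ x v * ρ x := by
      rw [← integral_const_mul]
      congr 1 with x
      simp only [hJ₁def]
      ring
    rw [l1, l2, keyX v]
  -- ∫ I₂ = ∫ J₂ via Fubini in the x-outer order
  have hEq2 : ∫ p, I₂ p ∂((volume : Measure ℝ).prod volume)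
      = ∫ p, J₂ p ∂((volume : Measure ℝ).prod volume) := by
    rw [integral_prod _ hI₂int, integral_prod _ hJ₂int]
    congr 1 with x
    have l1 : ∫ v, I₂ (x, v)
        = (1 / m * deriv Φ x * θ x * ρ x) * ∫ v, ψ₂ (x, v) * G v := by
      rw [← integral_const_mul]
      congr 1 with v
      simp only [hI₂def]
      ring
    have l2 : ∫ v, J₂ (x, v) = (deriv Φ x * θ x * ρ x) * ∫ v, v * ψ x v * G v := by
      rw [← integral_const_mul]
      congr 1 with v
      simp only [hJ₂def]
      ring
    have l3 : ∫ v, m * v * ψ x v * G v = m * ∫ v, v * ψ x v * G v := by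
      rw [← integral_const_mul]
      congr 1 with v
      ring
    rw [l1, l2, keyV x, l3]
    field_simp
  -- assemble
  have hLHS : (fun p : ℝ × ℝ =>
      (p.2 * deriv (fun x' => ψ x' p.2) p.1
          - 1 / m * deriv Φ p.1 * θ p.1 * deriv (fun v' => ψ p.1 v') p.2)
        * (Real.exp (-Φ p.1) * Real.exp (-m * p.2 ^ 2 / 2)))
      = fun p => I₁ p - I₂ p := by
    funext p
    rw [(hd1 p.1 p.2).deriv, (hd2 p.1 p.2).deriv]
    simp only [hI₁def, hI₂def]
    ring
  have hRHS : (fun p : ℝ × ℝ =>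
      p.2 * deriv Φ p.1 * (1 - θ p.1) * ψ p.1 p.2
        * (Real.exp (-Φ p.1) * Real.exp (-m * p.2 ^ 2 / 2)))
      = fun p => J₁ p - J₂ p := by
    funext p
    simp only [hJ₁def, hJ₂def]
    ring
  rw [hvol]
  rw [show (fun p : ℝ × ℝ =>
      (p.2 * deriv (fun x' => ψ x' p.2) p.1
          - 1 / m * deriv Φ p.1 * θ p.1 * deriv (fun v' => ψ p.1 v') p.2)
        * (Real.exp (-Φ p.1) * Real.exp (-m * p.2 ^ 2 / 2))) = fun p => I₁ p - I₂ p from hLHS]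
  rw [show (fun p : ℝ × ℝ =>
      p.2 * deriv Φ p.1 * (1 - θ p.1) * ψ p.1 p.2
        * (Real.exp (-Φ p.1) * Real.exp (-m * p.2 ^ 2 / 2))) = fun p => J₁ p - J₂ p from hRHS]
  rw [integral_sub hI₁int hI₂int, integral_sub hJ₁int hJ₂int, hEq1, hEq2]
end

section
/- Let α > 1/2 and β > 0, set c_k = k^{-(1+αβ)} and λ_k = k^{-β} for k ≥ 1, and define K(t) = ∑_{k≥1} c_k e^{-λ_k t} for t > 0. Then ∫_0^∞ K(t)² dt < ∞. In particular, K is square-integrable on (0,∞) in the asymptotically diffusive regime α > 1. -/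
open MeasureTheory Real Filter

private lemma summable_shift {q : ℝ} (hq : q < -1) :
    Summable (fun k : ℕ => ((k : ℝ) + 1) ^ q) := by
  have : Summable (fun n : ℕ => (n : ℝ) ^ q) := Real.summable_nat_rpow.2 hq
  have h := (summable_nat_add_iff 1).2 this
  refine h.congr fun k => ?_
  push_cast
  ring_nf

private lemma exp_neg_le_rpow {s : ℝ} (hs : 0 < s) {x : ℝ} (hx : 0 < x) :
    Real.exp (-x) ≤ ((Nat.ceil s).factorial : ℝ) * x ^ (-s) := by
  set n : ℕ := Nat.ceil s
  have hn1 : (1 : ℝ) ≤ (n.factorial : ℝ) := by exact_mod_cast Nat.one_le_iff_ne_zero.2 (Nat.factorial_ne_zero n)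
  rcases le_or_gt 1 x with hx1 | hx1
  · -- x ≥ 1 : exp x ≥ x^n / n!, and x^(-n) ≤ x^(-s)
    have h1 : x ^ n / (n.factorial : ℝ) ≤ Real.exp x := Real.pow_div_factorial_le_exp x hx.le n
    have hxn : (0:ℝ) < x ^ n := pow_pos hx n
    have h2 : Real.exp (-x) ≤ (n.factorial : ℝ) / x ^ n := by
      rw [Real.exp_neg, inv_eq_one_div, div_le_div_iff₀ (Real.exp_pos x) hxn]
      have h1' := (div_le_iff₀ (by positivity : (0:ℝ) < (n.factorial : ℝ))).1 h1
      nlinarith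
    refine h2.trans ?_
    rw [div_eq_mul_inv]
    refine mul_le_mul_of_nonneg_left ?_ (by positivity)
    have : (x ^ n)⁻¹ = x ^ (-(n:ℝ)) := by
      rw [← Real.rpow_natCast x n, ← Real.rpow_neg hx.le]
    rw [this]
    exact Real.rpow_le_rpow_of_exponent_le hx1 (by simpa using neg_le_neg (Nat.le_ceil s))
  · -- x < 1 : exp(-x) ≤ 1 ≤ x^(-s) ≤ n! x^(-s)
    have h1 : Real.exp (-x) ≤ 1 := Real.exp_le_one_iff.2 (by linarith)
    have h2 : (1:ℝ) ≤ x ^ (-s) := Real.one_le_rpow_of_pos_of_le_one_of_nonpos hx hx1.le (by linarith)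
    nlinarith [Real.rpow_pos_of_pos hx (-s)]

/-- Square integrability of the memory kernel for `α > 1/2`: with `c_k = k^{-(1+αβ)}`,
`λ_k = k^{-β}` (modes indexed by `k+1` for `k : ℕ`) and `K(t) = ∑ c_k e^{-λ_k t}`,
one has `∫_0^∞ K(t)² dt < ∞`. -/
theorem stmt_17 (α β : ℝ) (hα : 1 / 2 < α) (hβ : 0 < β) :
    MeasureTheory.IntegrableOn
      (fun t : ℝ => (∑' k : ℕ,
        ((k : ℝ) + 1) ^ (-(1 + α * β)) * Real.exp (-((k : ℝ) + 1) ^ (-β) * t)) ^ 2)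
      (Set.Ioi 0) := by
  -- notation
  set c : ℕ → ℝ := fun k => ((k : ℝ) + 1) ^ (-(1 + α * β)) with hc
  set lam : ℕ → ℝ := fun k => ((k : ℝ) + 1) ^ (-β) with hlam
  set K : ℝ → ℝ := fun t => ∑' k : ℕ, c k * Real.exp (-lam k * t) with hK
  have hkpos : ∀ k : ℕ, (0:ℝ) < (k : ℝ) + 1 := fun k => by positivity
  have hcpos : ∀ k, 0 < c k := fun k => Real.rpow_pos_of_pos (hkpos k) _
  have hlampos : ∀ k, 0 < lam k := fun k => Real.rpow_pos_of_pos (hkpos k) _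
  have hlamle1 : ∀ k, lam k ≤ 1 := fun k => by
    simpa using Real.rpow_le_one_of_one_le_of_nonpos (by simp [le_add_iff_nonneg_left]
      : (1:ℝ) ≤ (k:ℝ)+1) (by linarith : -β ≤ 0)
  -- summability of c
  have hcsum : Summable c := summable_shift (by nlinarith : -(1 + α * β) < -1)
  -- summability of the series for each t
  have hsum : ∀ t : ℝ, Summable (fun k => c k * Real.exp (-lam k * t)) := by
    intro t
    refine Summable.of_nonneg_of_le (fun k => by positivity)
      (fun k => ?_) (hcsum.mul_right (Real.exp |t|))
    have : Real.exp (-lam k * t) ≤ Real.exp |t| := by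
      refine Real.exp_le_exp.2 ?_
      calc -lam k * t ≤ |(-lam k * t)| := le_abs_self _
        _ = lam k * |t| := by rw [abs_mul, abs_neg, abs_of_pos (hlampos k)]
        _ ≤ 1 * |t| := mul_le_mul_of_nonneg_right (hlamle1 k) (abs_nonneg t)
        _ = |t| := one_mul _
    exact mul_le_mul_of_nonneg_left this (hcpos k).le
  -- measurability
  have hmeas : Measurable K := by
    refine measurable_of_tendsto_metrizable
      (f := fun n t => ∑ k ∈ Finset.range n, c k * Real.exp (-lam k * t)) (fun n => ?_) ?_
    · exact Finset.measurable_sum _ fun k _ =>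
        ((measurable_const.mul measurable_id).exp.const_mul (c k))
    · rw [tendsto_pi_nhds]
      intro t
      exact (hsum t).hasSum.tendsto_sum_nat
  -- choose s with 1/2 < s < α
  set s : ℝ := (α + 1/2) / 2 with hsdef
  have hs0 : 0 < s := by simp only [hsdef]; linarith
  have hsα : s < α := by simp only [hsdef]; linarith
  have h2s : (1:ℝ) < 2 * s := by simp only [hsdef]; linarith
  set N : ℝ := ((Nat.ceil s).factorial : ℝ) with hN
  have hN1 : (1:ℝ) ≤ N := by
    rw [hN]; exact Nat.one_le_cast.mpr (Nat.factorial_pos _)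
  -- the auxiliary summable series
  have hq : β * s - (1 + α * β) < -1 := by nlinarith
  have hdsum : Summable (fun k : ℕ => ((k : ℝ) + 1) ^ (β * s - (1 + α * β))) := summable_shift hq
  set D : ℝ := N * ∑' k : ℕ, ((k : ℝ) + 1) ^ (β * s - (1 + α * β)) with hD
  have hD0 : 0 ≤ D := by
    have : 0 ≤ ∑' k : ℕ, ((k : ℝ) + 1) ^ (β * s - (1 + α * β)) :=
      tsum_nonneg fun k => (Real.rpow_pos_of_pos (hkpos k) _).le
    positivity
  -- bound 1: K t ≤ S := ∑ c for t ≥ 0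
  set S : ℝ := ∑' k, c k with hS
  have hS0 : 0 ≤ S := tsum_nonneg fun k => (hcpos k).le
  have hKnonneg : ∀ t, 0 ≤ K t := fun t => tsum_nonneg fun k => by positivity
  have hKleS : ∀ t : ℝ, 0 ≤ t → K t ≤ S := by
    intro t ht
    refine Summable.tsum_le_tsum (fun k => ?_) (hsum t) hcsum
    have : Real.exp (-lam k * t) ≤ 1 := Real.exp_le_one_iff.2 (by nlinarith [hlampos k])
    nlinarith [hcpos k]
  -- bound 2: K t ≤ D * t^(-s) for t > 0
  have hKleD : ∀ t : ℝ, 0 < t → K t ≤ D * t ^ (-s) := by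
    intro t ht
    have key : ∀ k : ℕ, c k * Real.exp (-lam k * t) ≤
        N * ((k : ℝ) + 1) ^ (β * s - (1 + α * β)) * t ^ (-s) := by
      intro k
      have hx : 0 < lam k * t := mul_pos (hlampos k) ht
      have h1 : Real.exp (-(lam k * t)) ≤ N * (lam k * t) ^ (-s) := exp_neg_le_rpow hs0 hx
      have h2 : (lam k * t) ^ (-s) = ((k : ℝ) + 1) ^ (β * s) * t ^ (-s) := by
        rw [Real.mul_rpow (hlampos k).le ht.le, hlam]
        congr 1
        rw [← Real.rpow_mul (hkpos k).le]
        ring_nf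
      have h3 : c k * Real.exp (-lam k * t) ≤ c k * (N * (((k : ℝ) + 1) ^ (β * s) * t ^ (-s))) := by
        rw [neg_mul]
        calc c k * Real.exp (-(lam k * t)) ≤ c k * (N * (lam k * t) ^ (-s)) :=
              mul_le_mul_of_nonneg_left h1 (hcpos k).le
          _ = c k * (N * (((k : ℝ) + 1) ^ (β * s) * t ^ (-s))) := by rw [h2]
      refine h3.trans_eq ?_
      have : c k * ((k : ℝ) + 1) ^ (β * s) = ((k : ℝ) + 1) ^ (β * s - (1 + α * β)) := by
        rw [hc, ← Real.rpow_add (hkpos k)]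
        ring_nf
      rw [← this]; ring
    calc K t ≤ ∑' k : ℕ, N * ((k : ℝ) + 1) ^ (β * s - (1 + α * β)) * t ^ (-s) :=
          Summable.tsum_le_tsum key (hsum t) (by exact ((hdsum.mul_left N).mul_right _))
      _ = D * t ^ (-s) := by
          rw [hD, tsum_mul_right, tsum_mul_left]
  -- put it together
  have hIoi : Set.Ioi (0:ℝ) = Set.Ioc (0:ℝ) 1 ∪ Set.Ioi 1 :=
    (Set.Ioc_union_Ioi_eq_Ioi zero_le_one).symm
  have hmeas2 : Measurable (fun t => (K t) ^ 2) := hmeas.pow_const 2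
  rw [show (fun t : ℝ => (∑' k : ℕ,
        ((k : ℝ) + 1) ^ (-(1 + α * β)) * Real.exp (-((k : ℝ) + 1) ^ (-β) * t)) ^ 2)
      = fun t => (K t) ^ 2 from rfl, hIoi]
  refine MeasureTheory.IntegrableOn.union ?_ ?_
  · -- on Ioc 0 1 : bounded by S^2
    refine MeasureTheory.Integrable.mono' (g := fun _ => S ^ 2)
      (integrableOn_const measure_Ioc_lt_top.ne) hmeas2.aestronglyMeasurable ?_
    filter_upwards [MeasureTheory.ae_restrict_mem measurableSet_Ioc] with t ht
    rw [Real.norm_eq_abs, abs_of_nonneg (by positivity)]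
    have h1 := hKleS t ht.1.le
    have h2 := hKnonneg t
    nlinarith
  · -- on Ioi 1 : bounded by D^2 * t^(-(2s))
    refine MeasureTheory.Integrable.mono' (g := fun t => D ^ 2 * t ^ (-(2*s)))
      ((integrableOn_Ioi_rpow_of_lt (by linarith) one_pos).const_mul _)
      hmeas2.aestronglyMeasurable ?_
    filter_upwards [MeasureTheory.ae_restrict_mem measurableSet_Ioi] with t ht
    have ht0 : (0:ℝ) < t := lt_trans one_pos ht
    rw [Real.norm_eq_abs, abs_of_nonneg (by positivity)]
    have h1 := hKleD t ht0
    have h2 := hKnonneg t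
    have h3 : t ^ (-(2*s)) = (t ^ (-s)) ^ 2 := by
      rw [← Real.rpow_natCast (t ^ (-s)) 2, ← Real.rpow_mul ht0.le]
      ring_nf
    rw [h3]
    have h4 : 0 ≤ t ^ (-s) := (Real.rpow_pos_of_pos ht0 _).le
    nlinarith
end

section
/- Let Φ : ℝ → ℝ be a polynomial of even degree 2n with n ≥ 1 and positive leading coefficient, and assume Φ(x) ≥ 0 for all x ∈ ℝ. Then: (i) ∫_ℝ |Φ'(x)| e^{-Φ(x)} dx < ∞; (ii) there exists b > 0 with b(Φ(x)+1) ≥ x² for all x (so Φ satisfies Assumption 2.1); and (iii) there exists c > 0 such that for all x, y ∈ ℝ and t ∈ [0,1]: |Φ''(x)| ≤ c(Φ(x) + 1) and Φ((1−t)x + ty) ≤ c(Φ(x) + Φ(|x−y|) + 1) (so Φ satisfies condition (2.14) with q₁ = q₂ = 1). -/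
open MeasureTheory Real Filter

-- Coefficient bound: |Q(x)| ≤ C(|x|^m + 1)
open Polynomial in
lemma auxT (Q : Polynomial ℝ) (m : ℕ) (h : Q.natDegree ≤ m) :
    ∃ C : ℝ, 0 < C ∧ ∀ x : ℝ, |Q.eval x| ≤ C * (|x| ^ m + 1) := by
  refine ⟨(∑ i ∈ Finset.range (Q.natDegree + 1), |Q.coeff i|) + 1, by positivity, fun x => ?_⟩
  have h1 : |Q.eval x| ≤ ∑ i ∈ Finset.range (Q.natDegree + 1), |Q.coeff i| * |x| ^ i := by
    rw [Polynomial.eval_eq_sum_range]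
    refine (Finset.abs_sum_le_sum_abs _ _).trans (le_of_eq ?_)
    refine Finset.sum_congr rfl fun i _ => ?_
    rw [abs_mul, abs_pow]
  have h2 : ∀ i ∈ Finset.range (Q.natDegree + 1),
      |Q.coeff i| * |x| ^ i ≤ |Q.coeff i| * (|x| ^ m + 1) := by
    intro i hi
    refine mul_le_mul_of_nonneg_left ?_ (abs_nonneg _)
    rcases le_or_gt (|x|) 1 with hx | hx
    · have : |x| ^ i ≤ 1 := pow_le_one₀ (abs_nonneg _) hx
      nlinarith [pow_nonneg (abs_nonneg x) m]
    · have him : i ≤ m := le_trans (Nat.lt_succ_iff.mp (Finset.mem_range.mp hi)) h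
      have : |x| ^ i ≤ |x| ^ m := pow_le_pow_right₀ hx.le him
      linarith
  have h3 := h1.trans (Finset.sum_le_sum h2)
  rw [← Finset.sum_mul] at h3
  have hxm : (0:ℝ) ≤ |x| ^ m + 1 := by positivity
  nlinarith [Finset.sum_nonneg (fun i (_ : i ∈ Finset.range (Q.natDegree + 1)) => abs_nonneg (Q.coeff i))]

-- Half-line bound: x^(2n) ≤ C(R(x)+1) for x ≥ 0
open Polynomial in
lemma auxS (n : ℕ) (hn : 1 ≤ n) (R : Polynomial ℝ) (hdeg : R.natDegree = 2 * n)
    (hlead : 0 < R.leadingCoeff) (hpos : ∀ x : ℝ, 0 ≤ R.eval x) :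
    ∃ C : ℝ, 0 < C ∧ ∀ x : ℝ, 0 ≤ x → x ^ (2 * n) ≤ C * (R.eval x + 1) := by
  have hR0 : R ≠ 0 := fun h => by simp [h, leadingCoeff_zero] at hlead
  have hdegR : R.degree = (2 * n : ℕ) := by rw [degree_eq_natDegree hR0, hdeg]
  have hdegpos : 0 < R.degree := by rw [hdegR]; exact_mod_cast by positivity
  set R' : Polynomial ℝ := R + C 1 with hR'
  have hdegR' : R'.degree = (2 * n : ℕ) := by rw [hR', degree_add_C hdegpos, hdegR]
  have hQdeg : ((X : Polynomial ℝ) ^ (2 * n)).degree = R'.degree := by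
    rw [degree_X_pow, hdegR']
  have hten := Polynomial.div_tendsto_leadingCoeff_div_of_degree_eq ((X : Polynomial ℝ) ^ (2 * n)) R' hQdeg
  set L : ℝ := ((X : Polynomial ℝ) ^ (2 * n)).leadingCoeff / R'.leadingCoeff with hL
  have hevR' : ∀ x : ℝ, R'.eval x = R.eval x + 1 := by intro x; simp [hR']
  have hpos' : ∀ x : ℝ, 0 < R'.eval x := fun x => by
    rw [hevR']; have := hpos x; linarith
  set g : ℝ → ℝ := fun x => (x ^ (2 * n)) / R'.eval x with hg
  have hgten : Tendsto g atTop (nhds L) := by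
    refine hten.congr fun x => ?_
    simp [hg]
  have hev : ∀ᶠ x in atTop, g x ≤ L + 1 :=
    hgten.eventually (eventually_le_nhds (lt_add_one L))
  obtain ⟨X0, hX0⟩ := hev.exists_forall_of_atTop
  set X1 : ℝ := max X0 0 with hX1
  have hcont : ContinuousOn g (Set.Icc 0 X1) := by
    apply Continuous.continuousOn
    exact (continuous_pow _).div (R'.continuous_aeval.congr fun x => by simp) (fun x => (hpos' x).ne')
  obtain ⟨M, hM⟩ := (isCompact_Icc : IsCompact (Set.Icc (0:ℝ) X1)).exists_bound_of_continuousOn hcont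
  refine ⟨|L + 1| + |M| + 1, by positivity, fun x hx => ?_⟩
  have hgx : g x ≤ |L + 1| + |M| + 1 := by
    rcases le_or_gt x X1 with hxX | hxX
    · have hm := hM x ⟨hx, hxX⟩
      rw [Real.norm_eq_abs] at hm
      have : g x ≤ |g x| := le_abs_self _
      have : |M| ≥ M := le_abs_self M
      have h0 : (0:ℝ) ≤ |L + 1| := abs_nonneg _
      calc g x ≤ |g x| := le_abs_self _
        _ ≤ M := hm
        _ ≤ |M| := le_abs_self M
        _ ≤ |L + 1| + |M| + 1 := by linarith
    · have : X0 ≤ x := le_trans (le_max_left _ _) hxX.le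
      have := hX0 x this
      have h0 : (0:ℝ) ≤ |M| := abs_nonneg _
      calc g x ≤ L + 1 := ‹g x ≤ L + 1›
        _ ≤ |L + 1| := le_abs_self _
        _ ≤ |L + 1| + |M| + 1 := by linarith
  have := (div_le_iff₀ (hpos' x)).mp hgx
  rw [hevR'] at this
  exact this

-- Two-sided bound: x^(2n) ≤ C(P(x)+1) for all x
open Polynomial in
lemma aux2 (n : ℕ) (hn : 1 ≤ n) (P : Polynomial ℝ) (hdeg : P.natDegree = 2 * n)
    (hlead : 0 < P.leadingCoeff) (hpos : ∀ x : ℝ, 0 ≤ P.eval x) :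
    ∃ C : ℝ, 0 < C ∧ ∀ x : ℝ, x ^ (2 * n) ≤ C * (P.eval x + 1) := by
  obtain ⟨C1, hC1, h1⟩ := auxS n hn P hdeg hlead hpos
  set P' : Polynomial ℝ := P.comp (-X) with hP'
  have hXdeg : (-X : Polynomial ℝ).natDegree = 1 := by
    rw [natDegree_neg, natDegree_X]
  have hdeg' : P'.natDegree = 2 * n := by
    rw [hP', natDegree_comp, hXdeg, mul_one, hdeg]
  have hev' : ∀ x : ℝ, P'.eval x = P.eval (-x) := by
    intro x; rw [hP', eval_comp]; simp
  have hlead' : 0 < P'.leadingCoeff := by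
    rw [hP', leadingCoeff_comp (by rw [hXdeg]; norm_num)]
    have : (-X : Polynomial ℝ).leadingCoeff = -1 := by
      rw [leadingCoeff_neg, leadingCoeff_X]
    rw [this, hdeg]
    simp [pow_mul]
    exact hlead
  have hpos' : ∀ x : ℝ, 0 ≤ P'.eval x := fun x => by rw [hev']; exact hpos _
  obtain ⟨C2, hC2, h2⟩ := auxS n hn P' hdeg' hlead' hpos'
  refine ⟨C1 + C2, by positivity, fun x => ?_⟩
  have hP1 : 0 ≤ P.eval x + 1 := by have := hpos x; linarith
  rcases le_or_gt 0 x with hx | hx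
  · have := h1 x hx
    nlinarith
  · have hx' : 0 ≤ -x := by linarith
    have := h2 (-x) hx'
    rw [hev', neg_neg] at this
    have hpow : (-x) ^ (2 * n) = x ^ (2 * n) := by
      exact Even.neg_pow (even_two_mul n) x
    rw [hpow] at this
    nlinarith

/-- A nonnegative polynomial potential of even degree `2n` (`n ≥ 1`) with positive leading
coefficient satisfies: (i) `∫ |Φ'| e^{-Φ} < ∞`; (ii) `b(Φ(x)+1) ≥ x²` for some `b > 0`
(Assumption 2.1); and (iii) condition (2.14) with `q₁ = q₂ = 1`. -/
theorem stmt_19 (P : Polynomial ℝ) (n : ℕ) (hn : 1 ≤ n) (hdeg : P.natDegree = 2 * n)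
    (hlead : 0 < P.leadingCoeff) (hpos : ∀ x : ℝ, 0 ≤ P.eval x) :
    (MeasureTheory.Integrable fun x : ℝ =>
      |(Polynomial.derivative P).eval x| * Real.exp (-(P.eval x))) ∧
    (∃ b : ℝ, 0 < b ∧ ∀ x : ℝ, x ^ 2 ≤ b * (P.eval x + 1)) ∧
    (∃ c : ℝ, 0 < c ∧
      (∀ x : ℝ, |(Polynomial.derivative (Polynomial.derivative P)).eval x|
        ≤ c * (P.eval x + 1)) ∧
      (∀ x y : ℝ, ∀ t ∈ Set.Icc (0 : ℝ) 1,
        P.eval ((1 - t) * x + t * y) ≤ c * (P.eval x + P.eval |x - y| + 1))) := by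
  obtain ⟨c2, hc2, h2⟩ := aux2 n hn P hdeg hlead hpos
  -- even power absolute value
  have habs : ∀ x : ℝ, |x| ^ (2 * n) = x ^ (2 * n) := fun x =>
    Even.pow_abs (even_two_mul n) x
  -- Part (ii)
  have hii : ∀ x : ℝ, x ^ 2 ≤ (c2 + 1) * (P.eval x + 1) := by
    intro x
    have hP1 : 0 ≤ P.eval x := hpos x
    have hx2n := h2 x
    have hsq : x ^ 2 ≤ x ^ (2 * n) + 1 := by
      rcases le_or_gt (|x|) 1 with hx | hx
      · have h1 : x ^ 2 ≤ 1 := by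
          rw [← habs x] at hx2n
          have : |x| ^ 2 ≤ 1 := pow_le_one₀ (abs_nonneg _) hx
          calc x ^ 2 = |x| ^ 2 := (sq_abs x).symm
            _ ≤ 1 := this
        have h0 : 0 ≤ x ^ (2 * n) := by rw [← habs]; positivity
        linarith
      · have : |x| ^ 2 ≤ |x| ^ (2 * n) := pow_le_pow_right₀ hx.le (by omega)
        rw [habs, sq_abs] at this
        linarith
    nlinarith
  refine ⟨?_, ⟨c2 + 1, by positivity, hii⟩, ?_⟩
  · -- Part (i): integrability
    obtain ⟨C4, hC4, h4⟩ := auxT (Polynomial.derivative P) (2 * n)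
      (le_trans (Polynomial.natDegree_derivative_le P) (by omega))
    set K : ℝ := C4 * (c2 + 1) with hK
    have hKpos : 0 < K := by positivity
    set b : ℝ := c2 + 1 with hb
    have hbpos : 0 < b := by positivity
    have hbound : ∀ x : ℝ, |(Polynomial.derivative P).eval x| * Real.exp (-(P.eval x))
        ≤ (2 * K * Real.exp 1) * Real.exp (-(1 / (2 * b)) * x ^ 2) := by
      intro x
      have hp : 0 ≤ P.eval x := hpos x
      set p : ℝ := P.eval x with hpdef
      have h1 : |(Polynomial.derivative P).eval x| ≤ K * (p + 1) := by
        have ha := h4 x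
        rw [habs] at ha
        have hb2 := h2 x
        rw [← hpdef] at hb2
        have hle : x ^ (2 * n) + 1 ≤ (c2 + 1) * (p + 1) := by nlinarith
        calc |(Polynomial.derivative P).eval x| ≤ C4 * (x ^ (2 * n) + 1) := ha
          _ ≤ C4 * ((c2 + 1) * (p + 1)) := mul_le_mul_of_nonneg_left hle hC4.le
          _ = K * (p + 1) := by rw [hK, hb]; ring
      have hexp2 : p + 1 ≤ 2 * Real.exp ((p + 1) / 2) := by
        have := Real.add_one_le_exp ((p + 1) / 2)
        linarith
      have hx2 : x ^ 2 ≤ b * (p + 1) := hii x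
      have h4' : (1 - p) / 2 ≤ 1 - (1 / (2 * b)) * x ^ 2 := by
        have : (1 / (2 * b)) * x ^ 2 ≤ (p + 1) / 2 := by
          rw [div_mul_eq_mul_div, one_mul, div_le_div_iff₀ (by positivity) (by norm_num)]
          nlinarith
        linarith
      calc |(Polynomial.derivative P).eval x| * Real.exp (-p)
          ≤ (K * (p + 1)) * Real.exp (-p) :=
            mul_le_mul_of_nonneg_right h1 (Real.exp_pos _).le
        _ ≤ (K * (2 * Real.exp ((p + 1) / 2))) * Real.exp (-p) := by
            have := (Real.exp_pos (-p)).le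
            gcongr
        _ = 2 * K * Real.exp ((1 - p) / 2) := by
            have hmul : Real.exp ((p + 1) / 2) * Real.exp (-p) = Real.exp ((1 - p) / 2) := by
              rw [← Real.exp_add]; congr 1; ring
            rw [← hmul]; ring
        _ ≤ 2 * K * Real.exp (1 - (1 / (2 * b)) * x ^ 2) := by
            have := Real.exp_le_exp.mpr h4'
            gcongr
        _ = (2 * K * Real.exp 1) * Real.exp (-(1 / (2 * b)) * x ^ 2) := by
            rw [show (1 : ℝ) - 1 / (2 * b) * x ^ 2 = 1 + -(1 / (2 * b)) * x ^ 2 by ring,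
              Real.exp_add]
            ring
    have hcont : Continuous fun x : ℝ =>
        |(Polynomial.derivative P).eval x| * Real.exp (-(P.eval x)) := by
      apply Continuous.mul
      · exact (Polynomial.derivative P).continuous_aeval.abs.congr fun x => by simp
      · exact (Real.continuous_exp.comp (P.continuous_aeval.neg)).congr fun x => by simp
    have hg : MeasureTheory.Integrable fun x : ℝ =>
        (2 * K * Real.exp 1) * Real.exp (-(1 / (2 * b)) * x ^ 2) := by
      have := integrable_exp_neg_mul_sq (b := 1 / (2 * b)) (by positivity)
      exact this.const_mul _
    refine hg.mono' hcont.aestronglyMeasurable (ae_of_all _ fun x => ?_)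
    rw [Real.norm_eq_abs, abs_of_nonneg (by positivity)]
    exact hbound x
  · -- Part (iii)
    obtain ⟨C1, hC1, h1⟩ := auxT P (2 * n) (le_of_eq hdeg)
    obtain ⟨C3, hC3, h3⟩ := auxT (Polynomial.derivative (Polynomial.derivative P)) (2 * n)
      (le_trans (Polynomial.natDegree_derivative_le _)
        (le_trans (Nat.sub_le _ _) (le_trans (Polynomial.natDegree_derivative_le P) (by omega))))
    set ca : ℝ := C3 * (c2 + 1) with hca
    set cb : ℝ := C1 * (2 ^ (2 * n) * c2 * 2 + 1) with hcb
    have hcapos : 0 < ca := by positivity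
    have hcbpos : 0 < cb := by positivity
    refine ⟨ca + cb, by positivity, fun x => ?_, fun x y t ht => ?_⟩
    · have hP1 : 0 ≤ P.eval x := hpos x
      have := h3 x
      rw [habs] at this
      have := h2 x
      nlinarith
    · obtain ⟨ht0, ht1⟩ := ht
      set z : ℝ := (1 - t) * x + t * y with hz
      have hzb : |z| ≤ |x| + |x - y| := by
        have : z = x + t * (y - x) := by rw [hz]; ring
        rw [this]
        calc |x + t * (y - x)| ≤ |x| + |t * (y - x)| := abs_add_le _ _
          _ = |x| + t * |y - x| := by rw [abs_mul, abs_of_nonneg ht0]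
          _ ≤ |x| + 1 * |y - x| := by
              have : 0 ≤ |y - x| := abs_nonneg _
              nlinarith
          _ = |x| + |x - y| := by rw [one_mul, abs_sub_comm]
      have hPz : P.eval z ≤ C1 * (|z| ^ (2 * n) + 1) := le_trans (le_abs_self _) (h1 z)
      have hzpow : |z| ^ (2 * n) ≤ 2 ^ (2 * n) * (|x| ^ (2 * n) + |x - y| ^ (2 * n)) := by
        calc |z| ^ (2 * n) ≤ (|x| + |x - y|) ^ (2 * n) :=
              pow_le_pow_left₀ (abs_nonneg _) hzb _
          _ ≤ 2 ^ (2 * n - 1) * (|x| ^ (2 * n) + |x - y| ^ (2 * n)) :=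
              add_pow_le (abs_nonneg _) (abs_nonneg _) _
          _ ≤ 2 ^ (2 * n) * (|x| ^ (2 * n) + |x - y| ^ (2 * n)) := by
              have h2n : (2:ℝ) ^ (2 * n - 1) ≤ 2 ^ (2 * n) :=
                pow_le_pow_right₀ (by norm_num) (Nat.sub_le _ _)
              have : (0:ℝ) ≤ |x| ^ (2 * n) + |x - y| ^ (2 * n) := by positivity
              nlinarith
      have hx2n : |x| ^ (2 * n) ≤ c2 * (P.eval x + 1) := by
        rw [habs]; exact h2 x
      have hxy2n : |x - y| ^ (2 * n) ≤ c2 * (P.eval |x - y| + 1) := by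
        have := h2 |x - y|
        have habs2 : (|x - y|) ^ (2 * n) = |x - y| ^ (2 * n) := rfl
        exact this
      have hPx : 0 ≤ P.eval x := hpos x
      have hPxy : 0 ≤ P.eval |x - y| := hpos _
      have h2npos : (0:ℝ) < 2 ^ (2 * n) := by positivity
      nlinarith [mul_le_mul_of_nonneg_left hx2n h2npos.le,
        mul_le_mul_of_nonneg_left hxy2n h2npos.le]
end
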